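/- arXiv:2207.06656 — 8 statements merged into one kernel-verified Lean document; each statement's English description precedes it below -/
import Mathlib

section
/- For every natural number k, every bipartite graph G with pathwidth at most k has a 2-layer drawing with no (k+2)-crossing and no (k+1,k+1)-crossing. -/
open SimpleGraph

/-- `{A, B}` is a bipartition of the graph `G`. -/
def IsBipartition {V : Type*} (G : SimpleGraph V) (A B : Set V) : Prop :=
  Disjoint A B ∧ A ∪ B = Set.univ ∧
    ∀ ⦃u v⦄, G.Adj u v → (u ∈ A ∧ v ∈ B) ∨ (u ∈ B ∧ v ∈ A)

/-- `x` assigns distinct x-coordinates to the vertices within each layer,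
giving a valid 2-layer drawing (vertices of `A` on the line `y = 0`,
vertices of `B` on the line `y = 1`). -/
def IsTwoLayerDrawing {V : Type*} (A B : Set V) (x : V → ℝ) : Prop :=
  Set.InjOn x A ∧ Set.InjOn x B

/-- `e` is an edge of `G`, recorded with its `A`-endpoint first. -/
def IsDrawnEdge {V : Type*} (G : SimpleGraph V) (A B : Set V) (e : V × V) : Prop :=
  e.1 ∈ A ∧ e.2 ∈ B ∧ G.Adj e.1 e.2

/-- Two edges (drawn as straight segments) cross. -/
def Crosses {V : Type*} (x : V → ℝ) (e f : V × V) : Prop :=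
  (x e.1 - x f.1) * (x e.2 - x f.2) < 0

/-- A `k`-crossing: a set of `k` pairwise crossing edges. -/
def IsKCrossing {V : Type*} (G : SimpleGraph V) (A B : Set V) (x : V → ℝ)
    (k : ℕ) (S : Finset (V × V)) : Prop :=
  S.card = k ∧ (∀ e ∈ S, IsDrawnEdge G A B e) ∧
    ∀ e ∈ S, ∀ f ∈ S, e ≠ f → Crosses x e f

/-- A set of edges of `G` no two of which share a vertex. -/
def IsDrawnMatching {V : Type*} (G : SimpleGraph V) (A B : Set V)
    (S : Finset (V × V)) : Prop :=
  (∀ e ∈ S, IsDrawnEdge G A B e) ∧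
    ∀ e ∈ S, ∀ f ∈ S, e ≠ f →
      e.1 ≠ f.1 ∧ e.1 ≠ f.2 ∧ e.2 ≠ f.1 ∧ e.2 ≠ f.2

/-- A set of edges is non-crossing if no two of them cross. -/
def NonCrossing {V : Type*} (x : V → ℝ) (S : Finset (V × V)) : Prop :=
  ∀ e ∈ S, ∀ f ∈ S, ¬ Crosses x e f

/-- An `(s,t)`-crossing: a non-crossing `s`-matching `S` and a non-crossing
`t`-matching `T` such that every edge of `S` crosses every edge of `T`. -/
def IsSTCrossing {V : Type*} (G : SimpleGraph V) (A B : Set V) (x : V → ℝ)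
    (s t : ℕ) (S T : Finset (V × V)) : Prop :=
  IsDrawnMatching G A B S ∧ IsDrawnMatching G A B T ∧
    S.card = s ∧ T.card = t ∧
    NonCrossing x S ∧ NonCrossing x T ∧
    ∀ e ∈ S, ∀ f ∈ T, Crosses x e f

/-- `Bags` is a path-decomposition of `G`: the bags cover the vertices,
bags containing any given vertex are consecutive, and both endpoints of
every edge lie in a common bag. -/
def IsPathDecomp {V : Type*} (G : SimpleGraph V) {n : ℕ}
    (Bags : Fin n → Finset V) : Prop :=
  (∀ v, ∃ i, v ∈ Bags i) ∧
  (∀ i j l : Fin n, i ≤ j → j ≤ l → ∀ v, v ∈ Bags i → v ∈ Bags l → v ∈ Bags j) ∧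
  (∀ u v, G.Adj u v → ∃ i, u ∈ Bags i ∧ v ∈ Bags i)

/-- `G` has a path-decomposition of width at most `w`. -/
def PathwidthAtMost {V : Type*} (G : SimpleGraph V) (w : ℕ) : Prop :=
  ∃ (n : ℕ) (Bags : Fin n → Finset V),
    IsPathDecomp G Bags ∧ ∀ i, (Bags i).card ≤ w + 1

/-- The pathwidth of `G`: the minimum width of a path-decomposition of `G`. -/
noncomputable def pathwidth {V : Type*} (G : SimpleGraph V) : ℕ :=
  sInf {w | PathwidthAtMost G w}

/-- `G` is a caterpillar: a tree such that deleting the leaves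
(degree-1 vertices) gives a (possibly empty) path. -/
def IsCaterpillar {V : Type*} (G : SimpleGraph V) : Prop :=
  G.IsTree ∧
    (G.induce {v | (G.neighborSet v).ncard ≠ 1}).IsAcyclic ∧
    ({v | (G.neighborSet v).ncard ≠ 1} = (∅ : Set V) ∨
      (G.induce {v | (G.neighborSet v).ncard ≠ 1}).Connected) ∧
    ∀ v : {v | (G.neighborSet v).ncard ≠ 1},
      ((G.induce {v | (G.neighborSet v).ncard ≠ 1}).neighborSet v).ncard ≤ 2

theorem drawing_of_bounded_pathwidth {V : Type*} [Fintype V] (k : ℕ)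
    (G : SimpleGraph V) (hbip : ∃ A B, IsBipartition G A B)
    (hpw : PathwidthAtMost G k) :
    ∃ (A B : Set V) (x : V → ℝ), IsBipartition G A B ∧ IsTwoLayerDrawing A B x ∧
      (¬ ∃ S, IsKCrossing G A B x (k + 2) S) ∧
      (¬ ∃ S T, IsSTCrossing G A B x (k + 1) (k + 1) S T) := by

  classical
  obtain ⟨A, B, hbip⟩ := hbip
  obtain ⟨n, Bags, ⟨hcov, hconv, hedge⟩, hcard⟩ := hpw
  have hne : ∀ v : V, (Finset.univ.filter (fun i => v ∈ Bags i)).Nonempty := by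
    intro v
    obtain ⟨i, hi⟩ := hcov v
    exact ⟨i, by simp [hi]⟩
  set fst : V → Fin n := fun v => (Finset.univ.filter (fun i => v ∈ Bags i)).min' (hne v) with hfstdef
  set lst : V → Fin n := fun v => (Finset.univ.filter (fun i => v ∈ Bags i)).max' (hne v) with hlstdef
  have hfst_mem : ∀ v, v ∈ Bags (fst v) := by
    intro v
    have := Finset.min'_mem _ (hne v)
    simpa [hfstdef] using this
  have hlst_mem : ∀ v, v ∈ Bags (lst v) := by
    intro v
    have := Finset.max'_mem _ (hne v)
    simpa [hlstdef] using this
  have hfst_le : ∀ v i, v ∈ Bags i → fst v ≤ i := by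
    intro v i hi
    exact Finset.min'_le _ _ (by simp [hi])
  have hle_lst : ∀ v i, v ∈ Bags i → i ≤ lst v := by
    intro v i hi
    exact Finset.le_max' _ _ (by simp [hi])
  have hfl : ∀ v, fst v ≤ lst v := fun v => hfst_le v _ (hlst_mem v)
  have hmem_of : ∀ v (j : Fin n), fst v ≤ j → j ≤ lst v → v ∈ Bags j := fun v j h1 h2 =>
    hconv (fst v) j (lst v) h1 h2 v (hfst_mem v) (hlst_mem v)
  set C := Fintype.card V with hC
  set idx : V → ℕ := fun v => (Fintype.equivFin V v : ℕ) with hidxdef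
  have hidx_lt : ∀ v, idx v < C := fun v => (Fintype.equivFin V v).isLt
  have hidx_inj : Function.Injective idx := fun u v h =>
    (Fintype.equivFin V).injective (Fin.val_injective h)
  set x : V → ℝ := fun v => ((C * (fst v : ℕ) + idx v : ℕ) : ℝ) with hxdef
  have hmono : ∀ u v : V, (fst u : ℕ) < (fst v : ℕ) → x u < x v := by
    intro u v h
    have h1 : C * (fst u : ℕ) + idx u < C * (fst v : ℕ) + idx v := by
      have h2 : C * (fst u : ℕ) + idx u < C * ((fst u : ℕ) + 1) := by
        have := hidx_lt u; nlinarith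
      have h3 : C * ((fst u : ℕ) + 1) ≤ C * (fst v : ℕ) := Nat.mul_le_mul_left _ (by omega)
      omega
    simp only [hxdef]
    exact_mod_cast h1
  have hxinj : Function.Injective x := by
    intro u v h
    have hnat : C * (fst u : ℕ) + idx u = C * (fst v : ℕ) + idx v := by
      simp only [hxdef] at h; exact_mod_cast h
    rcases lt_trichotomy ((fst u : ℕ)) ((fst v : ℕ)) with hlt | heq | hgt
    · exact absurd h (ne_of_lt (hmono u v hlt))
    · apply hidx_inj; rw [heq] at hnat; omega
    · exact absurd h.symm (ne_of_lt (hmono v u hgt))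
  -- edge intervals
  set eL : V × V → Fin n := fun e => min (fst e.1) (fst e.2) with heLdef
  set eR : V × V → Fin n := fun e => max (lst e.1) (lst e.2) with heRdef
  have hLR : ∀ e, eL e ≤ eR e := fun e =>
    le_trans (min_le_left _ _) (le_trans (hfl _) (le_max_left _ _))
  have hhit : ∀ e, IsDrawnEdge G A B e → ∀ j, eL e ≤ j → j ≤ eR e →
      e.1 ∈ Bags j ∨ e.2 ∈ Bags j := by
    intro e he j h1 h2
    obtain ⟨t, ht1, ht2⟩ := hedge e.1 e.2 he.2.2
    rcases le_total j t with hjt | htj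
    · rcases le_total (fst e.1) (fst e.2) with hm | hm
      · left
        refine hmem_of _ _ ?_ (le_trans hjt (hle_lst _ _ ht1))
        calc fst e.1 = eL e := (min_eq_left hm).symm
          _ ≤ j := h1
      · right
        refine hmem_of _ _ ?_ (le_trans hjt (hle_lst _ _ ht2))
        calc fst e.2 = eL e := (min_eq_right hm).symm
          _ ≤ j := h1
    · rcases le_total (lst e.1) (lst e.2) with hm | hm
      · right
        refine hmem_of _ _ (le_trans (hfst_le _ _ ht2) htj) ?_
        calc j ≤ eR e := h2
          _ = lst e.2 := max_eq_right hm
      · left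
        refine hmem_of _ _ (le_trans (hfst_le _ _ ht1) htj) ?_
        calc j ≤ eR e := h2
          _ = lst e.1 := max_eq_left hm
  have hkey : ∀ u v : V, lst u < fst v → x u < x v := by
    intro u v h
    apply hmono
    have h1 : (fst u : ℕ) ≤ (lst u : ℕ) := hfl u
    have h2 : (lst u : ℕ) < (fst v : ℕ) := h
    omega
  have hover : ∀ e f, IsDrawnEdge G A B e → IsDrawnEdge G A B f → Crosses x e f →
      eL f ≤ eR e ∧ eL e ≤ eR f := by
    intro e f he hf hc
    have hc' : (x e.1 - x f.1) * (x e.2 - x f.2) < 0 := hc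
    constructor
    · by_contra hcon
      push_neg at hcon
      have h1 : x e.1 < x f.1 :=
        hkey _ _ (lt_of_le_of_lt (le_max_left _ _) (lt_of_lt_of_le hcon (min_le_left _ _)))
      have h2 : x e.2 < x f.2 :=
        hkey _ _ (lt_of_le_of_lt (le_max_right _ _) (lt_of_lt_of_le hcon (min_le_right _ _)))
      nlinarith
    · by_contra hcon
      push_neg at hcon
      have h1 : x f.1 < x e.1 :=
        hkey _ _ (lt_of_le_of_lt (le_max_left _ _) (lt_of_lt_of_le hcon (min_le_left _ _)))
      have h2 : x f.2 < x e.2 :=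
        hkey _ _ (lt_of_le_of_lt (le_max_right _ _) (lt_of_lt_of_le hcon (min_le_right _ _)))
      nlinarith
  have hAB : ∀ a b : V, a ∈ A → b ∈ B → a ≠ b := by
    intro a b ha hb h
    exact (Set.disjoint_left.mp hbip.1 ha) (h ▸ hb)
  have hdistinct : ∀ e f, IsDrawnEdge G A B e → IsDrawnEdge G A B f → Crosses x e f →
      e.1 ≠ f.1 ∧ e.1 ≠ f.2 ∧ e.2 ≠ f.1 ∧ e.2 ≠ f.2 := by
    intro e f he hf hc
    have hc' : (x e.1 - x f.1) * (x e.2 - x f.2) < 0 := hc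
    refine ⟨?_, hAB _ _ he.1 hf.2.1, fun h => hAB _ _ hf.1 he.2.1 h.symm, ?_⟩
    · intro h; rw [h] at hc'; simp at hc'
    · intro h; rw [h] at hc'; simp at hc'
  have hcount : ∀ (U : Finset (V × V)) (p : Fin n),
      (∀ e ∈ U, e.1 ∈ Bags p ∨ e.2 ∈ Bags p) →
      (∀ e ∈ U, ∀ f ∈ U, e ≠ f → e.1 ≠ f.1 ∧ e.1 ≠ f.2 ∧ e.2 ≠ f.1 ∧ e.2 ≠ f.2) →
      U.card ≤ (Bags p).card := by
    intro U p hhitp hdis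
    apply Finset.card_le_card_of_injOn (fun e => if e.1 ∈ Bags p then e.1 else e.2)
    · intro e he
      by_cases h : e.1 ∈ Bags p
      · simp only [if_pos h]; exact h
      · simp only [h, if_false]
        exact (hhitp e he).resolve_left h
    · intro e he f hf hef
      simp only [Finset.mem_coe] at he hf
      by_contra hne
      obtain ⟨h1, h2, h3, h4⟩ := hdis e he f hf hne
      by_cases he1 : e.1 ∈ Bags p <;> by_cases hf1 : f.1 ∈ Bags p <;>
        simp only [he1, hf1, if_true, if_false] at hef <;> tauto
  -- the main counting lemma
  have main : ∀ (T : Finset (V × V)) (e₀ : V × V), IsDrawnEdge G A B e₀ →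
      (∀ t ∈ T, IsDrawnEdge G A B t) →
      (∀ t ∈ T, ∀ t' ∈ T, t ≠ t' → t.1 ≠ t'.1 ∧ t.1 ≠ t'.2 ∧ t.2 ≠ t'.1 ∧ t.2 ≠ t'.2) →
      (∀ t ∈ T, Crosses x e₀ t) →
      (∀ t ∈ T, eL t ≤ eL e₀) →
      e₀ ∉ T → T.card ≤ k := by
    intro T e₀ he₀d hTd hTdis hcr hmaxL he₀T
    set p := eL e₀ with hp
    set U : Finset (V × V) := insert e₀ T with hU
    have hhitU : ∀ e ∈ U, e.1 ∈ Bags p ∨ e.2 ∈ Bags p := by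
      intro e heU
      rcases Finset.mem_insert.mp heU with rfl | heT
      · exact hhit e he₀d p le_rfl (hLR e)
      · have hov := hover e₀ e he₀d (hTd e heT) (hcr e heT)
        exact hhit e (hTd e heT) p (hmaxL e heT) hov.2
    have hUdis : ∀ e ∈ U, ∀ f ∈ U, e ≠ f →
        e.1 ≠ f.1 ∧ e.1 ≠ f.2 ∧ e.2 ≠ f.1 ∧ e.2 ≠ f.2 := by
      intro e heU f hfU hef
      rcases Finset.mem_insert.mp heU with rfl | heT <;>
        rcases Finset.mem_insert.mp hfU with rfl | hfT
      · exact absurd rfl hef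
      · exact hdistinct e f he₀d (hTd f hfT) (hcr f hfT)
      · obtain ⟨h1, h2, h3, h4⟩ := hdistinct f e he₀d (hTd e heT) (hcr e heT)
        exact ⟨h1.symm, h3.symm, h2.symm, h4.symm⟩
      · exact hTdis e heT f hfT hef
    have h1 := hcount U p hhitU hUdis
    have h2 := hcard p
    have h3 : U.card = T.card + 1 := Finset.card_insert_of_notMem he₀T
    omega
  refine ⟨A, B, x, hbip, ⟨fun u _ v _ h => hxinj h, fun u _ v _ h => hxinj h⟩, ?_, ?_⟩
  · rintro ⟨S, hc1, hc2, hc3⟩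
    have hSne : S.Nonempty := by
      rw [← Finset.card_pos, hc1]; omega
    obtain ⟨e₀, he₀, hmax⟩ := Finset.exists_max_image S eL hSne
    have he₀d := hc2 e₀ he₀
    have hfin := main (S.erase e₀) e₀ he₀d
      (fun t ht => hc2 t (Finset.mem_of_mem_erase ht))
      (fun t ht t' ht' hne =>
        hdistinct t t' (hc2 t (Finset.mem_of_mem_erase ht))
          (hc2 t' (Finset.mem_of_mem_erase ht'))
          (hc3 t (Finset.mem_of_mem_erase ht) t' (Finset.mem_of_mem_erase ht') hne))
      (fun t ht => hc3 e₀ he₀ t (Finset.mem_of_mem_erase ht)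
        (Ne.symm (Finset.ne_of_mem_erase ht)))
      (fun t ht => hmax t (Finset.mem_of_mem_erase ht))
      (Finset.notMem_erase e₀ S)
    have : (S.erase e₀).card = S.card - 1 := Finset.card_erase_of_mem he₀
    omega
  · rintro ⟨S, T, hmS, hmT, hcS, hcT, hncS, hncT, hx⟩
    have hsym : ∀ e f, Crosses x e f → Crosses x f e := by
      intro e f h
      have h' : (x e.1 - x f.1) * (x e.2 - x f.2) < 0 := h
      show (x f.1 - x e.1) * (x f.2 - x e.2) < 0
      nlinarith
    have hUne : (S ∪ T).Nonempty := by
      rw [← Finset.card_pos]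
      have := Finset.card_le_card (Finset.subset_union_left (s₁ := S) (s₂ := T))
      omega
    obtain ⟨e₀, he₀, hmax⟩ := Finset.exists_max_image (S ∪ T) eL hUne
    rcases Finset.mem_union.mp he₀ with heS | heT
    · have he₀T : e₀ ∉ T := by
        intro h
        have := hx e₀ heS e₀ h
        have h' : (x e₀.1 - x e₀.1) * (x e₀.2 - x e₀.2) < 0 := this
        simp at h'
      have hfin := main T e₀ (hmS.1 e₀ heS) hmT.1 hmT.2
        (fun t ht => hx e₀ heS t ht)
        (fun t ht => hmax t (Finset.mem_union_right _ ht))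
        he₀T
      omega
    · have he₀S : e₀ ∉ S := by
        intro h
        have := hx e₀ h e₀ heT
        have h' : (x e₀.1 - x e₀.1) * (x e₀.2 - x e₀.2) < 0 := this
        simp at h'
      have hfin := main S e₀ (hmT.1 e₀ heT) hmS.1 hmS.2
        (fun s hs => hsym s e₀ (hx s hs e₀ heT))
        (fun s hs => hmax s (Finset.mem_union_left _ hs))
        he₀S
      omega
end

section
/- Let G be a bipartite graph with bipartition {A,B}, where each vertex in A has degree at least 1 and each vertex in B has degree at most d. If G has a 2-layer drawing with no (k+1)-crossing and no non-crossing (ℓ+1)-matching, then |A| ≤ kℓd. -/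
open SimpleGraph

private lemma crosses_symm' {V : Type*} (x : V → ℝ) {e f : V × V}
    (h : Crosses x e f) : Crosses x f e := by
  unfold Crosses at *; nlinarith

private lemma core_bound' {V : Type*} [Fintype V] (k l : ℕ)
    (G : SimpleGraph V) (A B : Set V) (x : V → ℝ)
    (hdisj : Disjoint A B)
    (hk : ¬ ∃ S, IsKCrossing G A B x (k + 1) S)
    (hm : ¬ ∃ S : Finset (V × V),
      IsDrawnMatching G A B S ∧ S.card = l + 1 ∧ NonCrossing x S)
    (T : Finset (V × V))
    (hTd : ∀ e ∈ T, IsDrawnEdge G A B e)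
    (hT1 : ∀ e ∈ T, ∀ f ∈ T, e ≠ f → x e.1 ≠ x f.1)
    (hT2 : ∀ e ∈ T, ∀ f ∈ T, e ≠ f → x e.2 ≠ x f.2) :
    T.card ≤ k * l := by
  classical
  -- chains of pairwise-crossing edges ending at e
  set crCh : V × V → Finset (Finset (V × V)) := fun e =>
    T.powerset.filter (fun S => e ∈ S ∧ (∀ g ∈ S, x g.1 ≤ x e.1) ∧
      ∀ g ∈ S, ∀ g' ∈ S, g ≠ g' → Crosses x g g') with hcrCh
  set ncCh : V × V → Finset (Finset (V × V)) := fun e =>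
    T.powerset.filter (fun S => e ∈ S ∧ (∀ g ∈ S, x g.1 ≤ x e.1) ∧
      ∀ g ∈ S, ∀ g' ∈ S, ¬ Crosses x g g') with hncCh
  set cr : V × V → ℕ := fun e => (crCh e).sup Finset.card with hcr
  set nc : V × V → ℕ := fun e => (ncCh e).sup Finset.card with hnc
  have hself : ∀ e ∈ T, {e} ∈ crCh e ∧ {e} ∈ ncCh e := by
    intro e he
    constructor
    · refine Finset.mem_filter.mpr ⟨Finset.mem_powerset.mpr
        (Finset.singleton_subset_iff.mpr he), Finset.mem_singleton_self e, ?_, ?_⟩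
      · intro g hg; rw [Finset.mem_singleton.mp hg]
      · intro g hg g' hg' hne
        rw [Finset.mem_singleton.mp hg, Finset.mem_singleton.mp hg'] at hne
        exact absurd rfl hne
    · refine Finset.mem_filter.mpr ⟨Finset.mem_powerset.mpr
        (Finset.singleton_subset_iff.mpr he), Finset.mem_singleton_self e, ?_, ?_⟩
      · intro g hg; rw [Finset.mem_singleton.mp hg]
      · intro g hg g' hg'
        rw [Finset.mem_singleton.mp hg, Finset.mem_singleton.mp hg']
        simp [Crosses]
  have hcr1 : ∀ e ∈ T, 1 ≤ cr e := by
    intro e he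
    calc 1 = ({e} : Finset (V × V)).card := (Finset.card_singleton e).symm
      _ ≤ cr e := Finset.le_sup (hself e he).1
  have hnc1 : ∀ e ∈ T, 1 ≤ nc e := by
    intro e he
    calc 1 = ({e} : Finset (V × V)).card := (Finset.card_singleton e).symm
      _ ≤ nc e := Finset.le_sup (hself e he).2
  have hcrk : ∀ e, cr e ≤ k := by
    intro e
    refine Finset.sup_le fun S hS => ?_
    simp only [hcrCh, Finset.mem_filter, Finset.mem_powerset] at hS
    obtain ⟨hST, -, -, hcross⟩ := hS
    by_contra hcard
    push_neg at hcard
    obtain ⟨S', hS'S, hS'card⟩ :=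
      Finset.exists_subset_card_eq (show k + 1 ≤ S.card by omega)
    exact hk ⟨S', hS'card, fun e' he' => hTd e' (hST (hS'S he')),
      fun e' he' f' hf' hne => hcross e' (hS'S he') f' (hS'S hf') hne⟩
  have hncl : ∀ e, nc e ≤ l := by
    intro e
    refine Finset.sup_le fun S hS => ?_
    simp only [hncCh, Finset.mem_filter, Finset.mem_powerset] at hS
    obtain ⟨hST, -, -, hncross⟩ := hS
    by_contra hcard
    push_neg at hcard
    obtain ⟨S', hS'S, hS'card⟩ :=
      Finset.exists_subset_card_eq (show l + 1 ≤ S.card by omega)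
    refine hm ⟨S', ⟨fun e' he' => hTd e' (hST (hS'S he')), ?_⟩, hS'card,
      fun e' he' f' hf' => hncross e' (hS'S he') f' (hS'S hf')⟩
    intro e' he' f' hf' hne
    have he'T := hST (hS'S he'); have hf'T := hST (hS'S hf')
    have hx1 := hT1 e' he'T f' hf'T hne
    have hx2 := hT2 e' he'T f' hf'T hne
    have hd1 : e'.1 ≠ f'.1 := fun h => hx1 (by rw [h])
    have hd2 : e'.2 ≠ f'.2 := fun h => hx2 (by rw [h])
    have hA1 := (hTd e' he'T).1
    have hB2 := (hTd f' hf'T).2.1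
    have hA1' := (hTd f' hf'T).1
    have hB2' := (hTd e' he'T).2.1
    exact ⟨hd1, fun h => (hdisj.le_bot ⟨h ▸ hA1, hB2⟩ : False),
      fun h => (hdisj.le_bot ⟨hA1', h ▸ hB2'⟩ : False).elim, hd2⟩
  -- key monotonicity
  have key : ∀ e ∈ T, ∀ f ∈ T, x e.1 < x f.1 → cr e < cr f ∨ nc e < nc f := by
    intro e he f hf hlt
    have hef : e ≠ f := fun h => by rw [h] at hlt; exact lt_irrefl _ hlt
    by_cases hC : Crosses x e f
    · left
      obtain ⟨S, hS, hSsup⟩ := Finset.exists_mem_eq_sup (crCh e)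
        ⟨{e}, (hself e he).1⟩ Finset.card
      simp only [hcrCh, Finset.mem_filter, Finset.mem_powerset] at hS
      obtain ⟨hST, heS, hle, hcross⟩ := hS
      have hfS : f ∉ S := fun h => absurd (hle f h) (not_le.mpr hlt)
      have hins : insert f S ∈ crCh f := by
        simp only [hcrCh, Finset.mem_filter, Finset.mem_powerset]
        refine ⟨Finset.insert_subset hf hST, Finset.mem_insert_self _ _, ?_, ?_⟩
        · intro g hg
          rcases Finset.mem_insert.mp hg with rfl | hg
          · exact le_refl _
          · exact le_trans (hle g hg) (le_of_lt hlt)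
        · have hcf : ∀ g ∈ S, Crosses x g f := by
            intro g hg
            rcases eq_or_ne g e with rfl | hge
            · exact hC
            · have hgT := hST hg
              have hglt : x g.1 < x e.1 :=
                lt_of_le_of_ne (hle g hg) (hT1 g hgT e he hge)
              have h1 := hcross g hg e heS hge
              unfold Crosses at h1 hC ⊢
              have hg2 : x e.2 < x g.2 := by nlinarith
              have he2 : x f.2 < x e.2 := by nlinarith
              have hn : x g.1 - x f.1 < 0 := by linarith
              exact mul_neg_of_neg_of_pos hn (by linarith)
          intro g hg g' hg' hne
          rcases Finset.mem_insert.mp hg with hgf | hg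
          · rcases Finset.mem_insert.mp hg' with hgf' | hg'
            · exact absurd (hgf.trans hgf'.symm) hne
            · rw [hgf]; exact crosses_symm' x (hcf g' hg')
          · rcases Finset.mem_insert.mp hg' with hgf' | hg'
            · rw [hgf']; exact hcf g hg
            · exact hcross g hg g' hg' hne
      calc cr e = S.card := hSsup
        _ < (insert f S).card := by rw [Finset.card_insert_of_notMem hfS]; omega
        _ ≤ cr f := Finset.le_sup hins
    · right
      have hx2 := hT2 e he f hf hef
      have hlt2 : x e.2 < x f.2 := by
        unfold Crosses at hC
        push_neg at hC
        rcases lt_or_gt_of_ne hx2 with h | h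
        · exact h
        · exfalso; nlinarith
      obtain ⟨S, hS, hSsup⟩ := Finset.exists_mem_eq_sup (ncCh e)
        ⟨{e}, (hself e he).2⟩ Finset.card
      simp only [hncCh, Finset.mem_filter, Finset.mem_powerset] at hS
      obtain ⟨hST, heS, hle, hncross⟩ := hS
      have hfS : f ∉ S := fun h => absurd (hle f h) (not_le.mpr hlt)
      have hins : insert f S ∈ ncCh f := by
        simp only [hncCh, Finset.mem_filter, Finset.mem_powerset]
        refine ⟨Finset.insert_subset hf hST, Finset.mem_insert_self _ _, ?_, ?_⟩
        · intro g hg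
          rcases Finset.mem_insert.mp hg with rfl | hg
          · exact le_refl _
          · exact le_trans (hle g hg) (le_of_lt hlt)
        · have hcf : ∀ g ∈ S, ¬ Crosses x g f := by
            intro g hg
            rcases eq_or_ne g e with rfl | hge
            · exact hC
            · have hgT := hST hg
              have hglt : x g.1 < x e.1 :=
                lt_of_le_of_ne (hle g hg) (hT1 g hgT e he hge)
              have h1 := hncross g hg e heS
              have hg2 : x g.2 < x e.2 := by
                unfold Crosses at h1
                push_neg at h1
                rcases lt_or_gt_of_ne (hT2 g hgT e he hge) with h | h
                · exact h
                · exfalso; nlinarith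
              unfold Crosses
              push_neg
              nlinarith [mul_pos (show (0:ℝ) < x f.1 - x g.1 by linarith)
                (show (0:ℝ) < x f.2 - x g.2 by linarith)]
          intro g hg g' hg'
          rcases Finset.mem_insert.mp hg with hgf | hg
          · rcases Finset.mem_insert.mp hg' with hgf' | hg'
            · rw [hgf, hgf']; simp [Crosses]
            · rw [hgf]; exact fun h => hcf g' hg' (crosses_symm' x h)
          · rcases Finset.mem_insert.mp hg' with hgf' | hg'
            · rw [hgf']; exact hcf g hg
            · exact hncross g hg g' hg'
      calc nc e = S.card := hSsup
        _ < (insert f S).card := by rw [Finset.card_insert_of_notMem hfS]; omega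
        _ ≤ nc f := Finset.le_sup hins
  -- injection into [1,k] × [1,l]
  have hmaps : ∀ e ∈ T, (cr e, nc e) ∈ Finset.Icc 1 k ×ˢ Finset.Icc 1 l := by
    intro e he
    simp only [Finset.mem_product, Finset.mem_Icc]
    exact ⟨⟨hcr1 e he, hcrk e⟩, ⟨hnc1 e he, hncl e⟩⟩
  have hinj : Set.InjOn (fun e => (cr e, nc e)) T := by
    intro e he f hf heq
    by_contra hne
    simp only [Prod.mk.injEq] at heq
    rcases lt_trichotomy (x e.1) (x f.1) with h | h | h
    · rcases key e he f hf h with h' | h' <;> omega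
    · exact hT1 e he f hf hne h
    · rcases key f hf e he h with h' | h' <;> omega
  calc T.card ≤ (Finset.Icc 1 k ×ˢ Finset.Icc 1 l).card :=
        Finset.card_le_card_of_injOn _ hmaps hinj
    _ = k * l := by simp [Finset.card_product, Nat.card_Icc]

theorem card_le_of_no_crossing {V : Type*} [Fintype V] (k l d : ℕ)
    (G : SimpleGraph V) (A B : Set V) (x : V → ℝ)
    (hbip : IsBipartition G A B) (hdraw : IsTwoLayerDrawing A B x)
    (hA : ∀ a ∈ A, 1 ≤ (G.neighborSet a).ncard)
    (hB : ∀ b ∈ B, (G.neighborSet b).ncard ≤ d)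
    (hk : ¬ ∃ S, IsKCrossing G A B x (k + 1) S)
    (hm : ¬ ∃ S : Finset (V × V),
      IsDrawnMatching G A B S ∧ S.card = l + 1 ∧ NonCrossing x S) :
    A.ncard ≤ k * l * d := by
  classical
  obtain ⟨hdisj, hcover, hadjbip⟩ := hbip
  obtain ⟨hxA, hxB⟩ := hdraw
  have hch : ∀ a ∈ A, ∃ b, b ∈ B ∧ G.Adj a b := by
    intro a ha
    have h1 := hA a ha
    have hne : (G.neighborSet a).Nonempty := by
      rw [Set.nonempty_iff_ne_empty]
      intro h
      rw [h] at h1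
      simp at h1
    obtain ⟨v, hv⟩ := hne
    rcases hadjbip hv with ⟨-, hvB⟩ | ⟨haB, -⟩
    · exact ⟨v, hvB, hv⟩
    · exact (Set.disjoint_left.mp hdisj ha haB).elim
  set ch : V → V := fun a => if h : ∃ b, b ∈ B ∧ G.Adj a b then h.choose else a
    with hchdef
  have hchspec : ∀ a ∈ A, ch a ∈ B ∧ G.Adj a (ch a) := by
    intro a ha
    have h := hch a ha
    simp only [hchdef, dif_pos h]
    exact h.choose_spec
  have hAfin : A.Finite := Set.toFinite A
  set E : Finset (V × V) := hAfin.toFinset.image (fun a => (a, ch a)) with hE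
  have hEmem : ∀ e ∈ E, e.1 ∈ A ∧ e = (e.1, ch e.1) := by
    intro e he
    simp only [hE, Finset.mem_image] at he
    obtain ⟨a, haAF, rfl⟩ := he
    exact ⟨hAfin.mem_toFinset.mp haAF, rfl⟩
  have hEdrawn : ∀ e ∈ E, IsDrawnEdge G A B e := by
    intro e he
    obtain ⟨h1, h2⟩ := hEmem e he
    obtain ⟨hb, hadj'⟩ := hchspec e.1 h1
    rw [h2]
    exact ⟨h1, hb, hadj'⟩
  have hEfst : ∀ e ∈ E, ∀ f ∈ E, e.1 = f.1 → e = f := by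
    intro e he f hf h
    rw [(hEmem e he).2, (hEmem f hf).2, h]
  have hEcard : E.card = A.ncard := by
    rw [hE, Finset.card_image_of_injective _
      (fun a b h => (Prod.ext_iff.mp h).1)]
    exact (Set.ncard_eq_toFinset_card A hAfin).symm
  set R : Finset ℝ := E.image (fun e => x e.2) with hR
  have hfib : ∀ r ∈ R, (E.filter (fun e => x e.2 = r)).card ≤ d := by
    intro r hr
    obtain ⟨e0, he0E, he0r⟩ := Finset.mem_image.mp hr
    have hbB : e0.2 ∈ B := (hEdrawn e0 he0E).2.1
    have hinj : Set.InjOn (Prod.fst : V × V → V) ↑(E.filter (fun e => x e.2 = r)) := by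
      intro e he f hf h
      exact hEfst e (Finset.filter_subset _ _ he) f (Finset.filter_subset _ _ hf) h
    have hsub : (E.filter (fun e => x e.2 = r)).image Prod.fst ⊆
        (G.neighborSet e0.2).toFinite.toFinset := by
      intro a ha
      obtain ⟨e, he, rfl⟩ := Finset.mem_image.mp ha
      obtain ⟨heE, her⟩ := Finset.mem_filter.mp he
      have heB : e.2 ∈ B := (hEdrawn e heE).2.1
      have h2 : e.2 = e0.2 := hxB heB hbB (her.trans he0r.symm)
      have hadj2 : G.Adj e.1 e.2 := (hEdrawn e heE).2.2
      rw [Set.Finite.mem_toFinset, ← h2]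
      exact hadj2.symm
    calc (E.filter (fun e => x e.2 = r)).card
        = ((E.filter (fun e => x e.2 = r)).image Prod.fst).card :=
          (Finset.card_image_of_injOn hinj).symm
      _ ≤ ((G.neighborSet e0.2).toFinite.toFinset).card := Finset.card_le_card hsub
      _ = (G.neighborSet e0.2).ncard :=
          (Set.ncard_eq_toFinset_card _ ((G.neighborSet e0.2).toFinite)).symm
      _ ≤ d := hB e0.2 hbB
  have hE_le : E.card ≤ d * R.card := Finset.card_le_mul_card_image E d hfib
  set T : Finset (V × V) :=
    E.filter (fun e => ∀ f ∈ E, x f.2 = x e.2 → x e.1 ≤ x f.1) with hT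
  have hTsub : T ⊆ E := Finset.filter_subset _ _
  have hT1 : ∀ e ∈ T, ∀ f ∈ T, e ≠ f → x e.1 ≠ x f.1 := by
    intro e he f hf hne h
    have h1 := hxA (hEmem e (hTsub he)).1 (hEmem f (hTsub hf)).1 h
    exact hne (hEfst e (hTsub he) f (hTsub hf) h1)
  have hT2 : ∀ e ∈ T, ∀ f ∈ T, e ≠ f → x e.2 ≠ x f.2 := by
    intro e he f hf hne h
    obtain ⟨heE, hemin⟩ := Finset.mem_filter.mp he
    obtain ⟨hfE, hfmin⟩ := Finset.mem_filter.mp hf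
    exact hT1 e he f hf hne (le_antisymm (hemin f hfE h.symm) (hfmin e heE h))
  have hRT : R = T.image (fun e => x e.2) := by
    apply Finset.Subset.antisymm
    · intro r hr
      obtain ⟨e0, he0E, he0r⟩ := Finset.mem_image.mp hr
      obtain ⟨e, heF, hemin⟩ := (E.filter (fun e => x e.2 = r)).exists_min_image
        (fun e => x e.1) ⟨e0, Finset.mem_filter.mpr ⟨he0E, he0r⟩⟩
      obtain ⟨heE, her⟩ := Finset.mem_filter.mp heF
      have heT : e ∈ T := by
        refine Finset.mem_filter.mpr ⟨heE, ?_⟩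
        intro f hfE hfx
        exact hemin f (Finset.mem_filter.mpr ⟨hfE, hfx.trans her⟩)
      exact Finset.mem_image.mpr ⟨e, heT, her⟩
    · intro r hr
      obtain ⟨e, heT, her⟩ := Finset.mem_image.mp hr
      exact Finset.mem_image.mpr ⟨e, hTsub heT, her⟩
  have hTcard : R.card = T.card := by
    rw [hRT]
    refine Finset.card_image_of_injOn ?_
    intro e he f hf h
    by_contra hne
    exact hT2 e he f hf hne h
  have hTk : T.card ≤ k * l := core_bound' k l G A B x hdisj hk hm T
    (fun e he => hEdrawn e (hTsub he)) hT1 hT2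
  calc A.ncard = E.card := hEcard.symm
    _ ≤ d * R.card := hE_le
    _ = d * T.card := by rw [hTcard]
    _ ≤ d * (k * l) := Nat.mul_le_mul_left d hTk
    _ = k * l * d := by ring
end

section
/- A connected bipartite graph G has a 2-layer drawing with no crossings if and only if G is a caterpillar. -/
open SimpleGraph

section Aux

open SimpleGraph Walk

variable {V : Type*} {G : SimpleGraph V} {A B : Set V} {a b u v w : V}

lemma IsBipartition.not_both (h : IsBipartition G A B) (ha : u ∈ A) (hb : u ∈ B) : False :=
  Set.disjoint_left.mp h.1 ha hb

lemma IsBipartition.symm (h : IsBipartition G A B) : IsBipartition G B A :=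
  ⟨h.1.symm, by rw [Set.union_comm]; exact h.2.1, fun u v huv => (h.2.2 huv).symm⟩

lemma IsBipartition.mem_or (h : IsBipartition G A B) (u : V) : u ∈ A ∨ u ∈ B := by
  have : u ∈ A ∪ B := h.2.1 ▸ Set.mem_univ u
  exact this

lemma IsBipartition.memB (h : IsBipartition G A B) (hadj : G.Adj u v) (hu : u ∈ A) : v ∈ B := by
  rcases h.2.2 hadj with ⟨h1, h2⟩ | ⟨h1, h2⟩
  · exact h2
  · exact (h.not_both hu h1).elim

lemma IsBipartition.memA (h : IsBipartition G A B) (hadj : G.Adj u v) (hu : u ∈ B) : v ∈ A :=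
  h.symm.memB hadj hu

lemma two_nbrs_ncard (hab : a ≠ b) (h1 : G.Adj w a) (h2 : G.Adj w b) :
    (G.neighborSet w).ncard ≠ 1 := by
  intro h
  obtain ⟨c, hc⟩ := Set.ncard_eq_one.mp h
  have ha : a ∈ G.neighborSet w := h1
  have hb : b ∈ G.neighborSet w := h2
  rw [hc, Set.mem_singleton_iff] at ha hb
  exact hab (ha.trans hb.symm)

/-- An internal vertex of a path has two distinct neighbours. -/
lemma internal_mem_S {p : G.Walk u v} (hp : p.IsPath) (hw : w ∈ p.support)
    (hwu : w ≠ u) (hwv : w ≠ v) : (G.neighborSet w).ncard ≠ 1 := by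
  classical
  set t := p.takeUntil w hw with ht
  set d := p.dropUntil w hw with hd
  have hspec : t.append d = p := p.take_spec hw
  obtain ⟨x1, hx1, q1, hq1⟩ := Walk.not_nil_iff.mp (Walk.not_nil_of_ne hwu : ¬ t.reverse.Nil)
  obtain ⟨x2, hx2, q2, hq2⟩ := Walk.not_nil_iff.mp (Walk.not_nil_of_ne hwv : ¬ d.Nil)
  have hmem1 : x1 ∈ t.support := by
    have : x1 ∈ t.reverse.support := by
      rw [hq1, Walk.support_cons]
      exact List.mem_cons_of_mem _ q1.start_mem_support
    rwa [Walk.support_reverse, List.mem_reverse] at this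
  have hmem2 : x2 ∈ d.support.tail := by
    rw [hq2, Walk.support_cons]
    exact q2.start_mem_support
  have hnodup : (t.support ++ d.support.tail).Nodup := by
    rw [← Walk.support_append, hspec]
    exact hp.support_nodup
  have hne : x1 ≠ x2 := fun h =>
    (List.disjoint_of_nodup_append hnodup) hmem1 (h ▸ hmem2)
  exact two_nbrs_ncard hne hx1 hx2

/-- Walks starting in a mutually-isolated pair stay in the pair. -/
lemma confined (hA : G.neighborSet a = {b}) (hB : G.neighborSet b = {a}) :
    ∀ {u v : V} (_ : G.Walk u v), u ∈ ({a, b} : Set V) → v ∈ ({a, b} : Set V) := by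
  intro u v p
  induction p with
  | nil => exact id
  | @cons s s' t h q ih =>
    intro hs
    apply ih
    rcases hs with hs | hs
    · have : s' ∈ G.neighborSet a := by rw [← hs]; exact h
      rw [hA] at this
      exact Or.inr this
    · have : s' ∈ G.neighborSet b := by rw [← hs]; exact h
      rw [hB] at this
      exact Or.inl this

/-- parity of walk length vs bipartition -/
lemma walk_parity (hbip : IsBipartition G A B) :
    ∀ {u v : V} (p : G.Walk u v), (Even p.length ↔ (u ∈ A ↔ v ∈ A)) := by
  intro u v p
  induction p with
  | nil => simp
  | @cons s s' t h q ih =>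
    have step : s ∈ A ↔ s' ∉ A := by
      constructor
      · intro hs hs'
        exact hbip.not_both hs' (hbip.memB h hs)
      · intro hs
        rcases hbip.mem_or s with h1 | h1
        · exact h1
        · exact (hs (hbip.memA h h1)).elim
    rw [Walk.length_cons, Nat.even_add_one, ih]
    tauto

lemma dist_le_of_mem_support {p : G.Walk u v} (hw : w ∈ p.support) :
    G.dist u w ≤ p.length := by
  classical
  exact le_trans (SimpleGraph.dist_le _) (p.length_takeUntil_le hw)

lemma dist_adj_cases (hbip : IsBipartition G A B) (hc : G.Connected) (h : G.Adj v w) (u : V) :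
    G.dist u w = G.dist u v + 1 ∨ G.dist u v = G.dist u w + 1 := by
  have hvw : G.dist v w = 1 := SimpleGraph.dist_eq_one_iff_adj.mpr h
  have hwv : G.dist w v = 1 := SimpleGraph.dist_eq_one_iff_adj.mpr h.symm
  have h1 : G.dist u w ≤ G.dist u v + 1 := by
    have := hc.dist_triangle (u := u) (v := v) (w := w)
    omega
  have h2 : G.dist u v ≤ G.dist u w + 1 := by
    have := hc.dist_triangle (u := u) (v := w) (w := v)
    omega
  have hne : G.dist u v ≠ G.dist u w := by
    intro heq
    obtain ⟨p, hp⟩ := hc.exists_walk_length_eq_dist u v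
    obtain ⟨q, hq⟩ := hc.exists_walk_length_eq_dist u w
    have e1 := walk_parity hbip p
    have e2 := walk_parity hbip q
    rw [hp, heq] at e1
    rw [hq] at e2
    have hvwA : v ∈ A ↔ w ∈ A := by tauto
    have : v ∈ A ↔ w ∉ A := by
      constructor
      · intro hs hs'
        exact hbip.not_both hs' (hbip.memB h hs)
      · intro hs
        rcases hbip.mem_or v with h1 | h1
        · exact h1
        · exact (hs (hbip.memA h h1)).elim
    tauto
  omega

lemma exists_pred (hc : G.Connected) {u s : V} {d : ℕ} (hd : G.dist u s = d + 1) :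
    ∃ w, G.Adj w s ∧ G.dist u w = d ∧ (w = u ∨ (G.neighborSet w).ncard ≠ 1) := by
  obtain ⟨P, hP, hPl⟩ := hc.exists_path_of_dist u s
  have hnn : ¬ P.reverse.Nil := by
    rw [Walk.not_nil_iff_lt_length, Walk.length_reverse, hPl, hd]
    omega
  obtain ⟨w, hadj, q, hq⟩ := Walk.not_nil_iff.mp hnn
  have hql : q.length = d := by
    have : P.reverse.length = q.length + 1 := by rw [hq, Walk.length_cons]
    rw [Walk.length_reverse, hPl, hd] at this
    omega
  refine ⟨w, hadj.symm, ?_, ?_⟩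
  · have hle : G.dist u w ≤ d := by
      have := SimpleGraph.dist_le q.reverse
      rwa [Walk.length_reverse, hql] at this
    have hge : d ≤ G.dist u w := by
      have htri := hc.dist_triangle (u := u) (v := w) (w := s)
      have : G.dist w s = 1 := SimpleGraph.dist_eq_one_iff_adj.mpr hadj.symm
      omega
    omega
  · by_cases hwu : w = u
    · exact Or.inl hwu
    · refine Or.inr (internal_mem_S (p := P.reverse) hP.reverse ?_ hadj.ne' hwu)
      rw [hq, Walk.support_cons]
      exact List.mem_cons_of_mem _ q.start_mem_support

end Aux
section Aux2

open SimpleGraph Walk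

variable {V : Type*} {G : SimpleGraph V} {A B : Set V} {a b u v w : V}

/-- An end of the spine: a vertex of `S` with at most one neighbour in `S`. -/
lemma exists_endvertex [Fintype V] (htree : G.IsTree) (hbip : IsBipartition G A B)
    {s0 : V} (hs0 : (G.neighborSet s0).ncard ≠ 1) :
    ∃ u, (G.neighborSet u).ncard ≠ 1 ∧
      ∀ a b, (G.neighborSet a).ncard ≠ 1 → (G.neighborSet b).ncard ≠ 1 →
        G.Adj u a → G.Adj u b → a = b := by
  classical
  have hc : G.Connected := htree.isConnected
  obtain ⟨u, huF, hmax⟩ := (Finset.univ.filter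
      (fun v => (G.neighborSet v).ncard ≠ 1)).exists_max_image (fun v => G.dist s0 v)
      ⟨s0, Finset.mem_filter.mpr ⟨Finset.mem_univ _, hs0⟩⟩
  simp only [Finset.mem_filter, Finset.mem_univ, true_and] at huF
  refine ⟨u, huF, ?_⟩
  intro a b ha hb hua hub
  have hmaxa : G.dist s0 a ≤ G.dist s0 u := hmax a (Finset.mem_filter.mpr ⟨Finset.mem_univ _, ha⟩)
  have hmaxb : G.dist s0 b ≤ G.dist s0 u := hmax b (Finset.mem_filter.mpr ⟨Finset.mem_univ _, hb⟩)
  have hda : G.dist s0 u = G.dist s0 a + 1 := by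
    rcases dist_adj_cases hbip hc hua s0 with h | h <;> omega
  have hdb : G.dist s0 u = G.dist s0 b + 1 := by
    rcases dist_adj_cases hbip hc hub s0 with h | h <;> omega
  obtain ⟨Pa, hPa, hPal⟩ := hc.exists_path_of_dist s0 a
  obtain ⟨Pb, hPb, hPbl⟩ := hc.exists_path_of_dist s0 b
  have hnina : u ∉ Pa.support := by
    intro hmem
    have := dist_le_of_mem_support hmem
    omega
  have hninb : u ∉ Pb.support := by
    intro hmem
    have := dist_le_of_mem_support hmem
    omega
  have hQa : (Walk.cons hua Pa.reverse).IsPath := by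
    rw [Walk.cons_isPath_iff]
    refine ⟨hPa.reverse, ?_⟩
    rwa [Walk.support_reverse, List.mem_reverse]
  have hQb : (Walk.cons hub Pb.reverse).IsPath := by
    rw [Walk.cons_isPath_iff]
    refine ⟨hPb.reverse, ?_⟩
    rwa [Walk.support_reverse, List.mem_reverse]
  obtain ⟨p₀, -, hup⟩ := htree.existsUnique_path u s0
  have heq : Walk.cons hua Pa.reverse = Walk.cons hub Pb.reverse :=
    (hup _ hQa).trans (hup _ hQb).symm
  have := congrArg (fun q => Walk.getVert q 1) heq
  simpa [Walk.getVert_cons] using this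

/-- distance from the spine end is injective on `S`. -/
lemma sigma_inj [Fintype V] (hc : G.Connected) {u : V}
    (hu : (G.neighborSet u).ncard ≠ 1)
    (hu1 : ∀ a b, (G.neighborSet a).ncard ≠ 1 → (G.neighborSet b).ncard ≠ 1 →
        G.Adj u a → G.Adj u b → a = b)
    (hdeg : ∀ w a b c, (G.neighborSet w).ncard ≠ 1 → (G.neighborSet a).ncard ≠ 1 →
        (G.neighborSet b).ncard ≠ 1 → (G.neighborSet c).ncard ≠ 1 →
        G.Adj w a → G.Adj w b → G.Adj w c → a = b ∨ a = c ∨ b = c) :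
    ∀ (d : ℕ) (s t : V), (G.neighborSet s).ncard ≠ 1 → (G.neighborSet t).ncard ≠ 1 →
      G.dist u s = d → G.dist u t = d → s = t := by
  intro d
  induction d using Nat.strong_induction_on with
  | _ d ih =>
    intro s t hs ht hds hdt
    match d, hds, hdt with
    | 0, hds, hdt =>
      rw [hc.dist_eq_zero_iff] at hds hdt
      rw [← hds, ← hdt]
    | (d + 1), hds, hdt =>
      obtain ⟨ws, hws_adj, hws_d, hws_S⟩ := exists_pred hc hds
      obtain ⟨wt, hwt_adj, hwt_d, hwt_S⟩ := exists_pred hc hdt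
      have hwsS : (G.neighborSet ws).ncard ≠ 1 := hws_S.elim (fun h => h ▸ hu) id
      have hwtS : (G.neighborSet wt).ncard ≠ 1 := hwt_S.elim (fun h => h ▸ hu) id
      have hw : ws = wt := ih d (Nat.lt_succ_self d) ws wt hwsS hwtS hws_d hwt_d
      subst hw
      by_contra hst
      rcases Nat.eq_zero_or_pos d with hd0 | hdpos
      · subst hd0
        rw [hc.dist_eq_zero_iff] at hws_d
        subst hws_d
        exact hst (hu1 s t hs ht hws_adj hwt_adj)
      · obtain ⟨d', rfl⟩ : ∃ d', d = d' + 1 := ⟨d - 1, by omega⟩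
        obtain ⟨w', hw'_adj, hw'_d, hw'_S⟩ := exists_pred hc hws_d
        have hw'S : (G.neighborSet w').ncard ≠ 1 := hw'_S.elim (fun h => h ▸ hu) id
        have h1 : s ≠ w' := by
          intro h
          rw [h] at hds
          omega
        have h2 : t ≠ w' := by
          intro h
          rw [h] at hdt
          omega
        rcases hdeg ws s t w' hwsS hs ht hw'S hws_adj hwt_adj hw'_adj.symm with
          h | h | h
        · exact hst h
        · exact h1 h
        · exact h2 h

/-- a walk whose support lies in `S` gives reachability in the induced graph. -/
lemma reach_induce {S : Set V} :
    ∀ {u v : V} (p : G.Walk u v), (∀ w ∈ p.support, w ∈ S) →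
      ∀ (hu : u ∈ S) (hv : v ∈ S), (G.induce S).Reachable ⟨u, hu⟩ ⟨v, hv⟩ := by
  intro u v p
  induction p with
  | nil => intro _ hu hv; rfl
  | @cons s s' t h q ih =>
    intro hsup hu hv
    have hs' : s' ∈ S := hsup s' (by simp)
    have hadj : (G.induce S).Adj ⟨s, hu⟩ ⟨s', hs'⟩ := h
    exact hadj.reachable.trans (ih (fun w hw => hsup w (by simp [hw])) hs' hv)

/-- every vertex of a cycle has two distinct neighbours on the cycle. -/
lemma cycle_two_nbrs {c : G.Walk v v} (hc : c.IsCycle) (ha : a ∈ c.support) :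
    ∃ b1 b2, b1 ≠ b2 ∧ G.Adj a b1 ∧ G.Adj a b2 ∧ b1 ∈ c.support ∧ b2 ∈ c.support := by
  classical
  set c' := c.rotate a ha with hc'def
  have hc' : c'.IsCycle := hc.rotate ha
  obtain ⟨b1, h1, p, hp⟩ := Walk.not_nil_iff.mp hc'.not_nil
  have hcyc : p.IsPath ∧ s(a, b1) ∉ p.edges := by
    rw [hp] at hc'
    exact (Walk.cons_isCycle_iff p h1).mp hc'
  have hpnn : ¬ p.reverse.Nil := by
    rw [Walk.not_nil_iff_lt_length, Walk.length_reverse]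
    have h3 := hc'.three_le_length
    rw [hp, Walk.length_cons] at h3
    omega
  obtain ⟨b2, h2, q, hq⟩ := Walk.not_nil_iff.mp hpnn
  have hb2p : b2 ∈ p.support := by
    have : b2 ∈ p.reverse.support := by
      rw [hq, Walk.support_cons]
      exact List.mem_cons_of_mem _ q.start_mem_support
    rwa [Walk.support_reverse, List.mem_reverse] at this
  have hmemtail : ∀ z ∈ p.support, z ∈ c.support := by
    intro z hz
    have : z ∈ c'.support.tail := by
      rw [hp, Walk.support_cons]
      exact hz
    have hrot := Walk.support_rotate c a ha
    have : z ∈ c.support.tail := hrot.mem_iff.mp this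
    exact List.mem_of_mem_tail this
  have hne : b1 ≠ b2 := by
    intro h
    subst h
    apply hcyc.2
    have : s(a, b1) ∈ p.reverse.edges := by
      rw [hq, Walk.edges_cons]
      exact List.mem_cons_self
    rwa [Walk.edges_reverse, List.mem_reverse] at this
  exact ⟨b1, b2, hne, h1, h2, hmemtail _ p.start_mem_support, hmemtail _ hb2p⟩

end Aux2
section Aux3

open SimpleGraph Walk

variable {V : Type*} {G : SimpleGraph V} {A B : Set V} {x : V → ℝ} {a b u v w : V}

lemma acyclic_of_noncross (hbip : IsBipartition G A B)
    (hA : Set.InjOn x A) (hB : Set.InjOn x B)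
    (hnc : ∀ e f : V × V, IsDrawnEdge G A B e → IsDrawnEdge G A B f → ¬ Crosses x e f) :
    G.IsAcyclic := by
  classical
  intro v cw hc
  have hAex : ∃ a ∈ cw.support, a ∈ A := by
    obtain ⟨b1, h1, p, hp⟩ := Walk.not_nil_iff.mp hc.not_nil
    rcases hbip.2.2 h1 with ⟨hva, _⟩ | ⟨_, hb⟩
    · exact ⟨v, cw.start_mem_support, hva⟩
    · refine ⟨b1, ?_, hb⟩
      rw [hp, Walk.support_cons]
      exact List.mem_cons_of_mem _ p.start_mem_support
  obtain ⟨a0, ha0⟩ := hAex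
  obtain ⟨a, haT, hmin⟩ := (cw.support.toFinset.filter (· ∈ A)).exists_min_image x
    ⟨a0, by simp [ha0.1, ha0.2]⟩
  simp only [Finset.mem_filter, List.mem_toFinset] at haT
  obtain ⟨hasupp, haA⟩ := haT
  obtain ⟨b1, b2, hbne, hab1, hab2, hb1s, hb2s⟩ := cycle_two_nbrs hc hasupp
  have hb1B : b1 ∈ B := hbip.memB hab1 haA
  have hb2B : b2 ∈ B := hbip.memB hab2 haA
  have key : ∀ c1 c2 : V, G.Adj a c1 → G.Adj a c2 → c1 ∈ cw.support → c1 ∈ B → c2 ∈ B →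
      x c1 < x c2 → False := by
    intro c1 c2 hac1 hac2 hc1s hc1B hc2B hxlt
    obtain ⟨a1, a2, hane, ha1, ha2, ha1s, ha2s⟩ := cycle_two_nbrs hc hc1s
    have hpick : ∃ a'', a'' ≠ a ∧ G.Adj c1 a'' ∧ a'' ∈ cw.support := by
      rcases eq_or_ne a1 a with h | h
      · exact ⟨a2, h ▸ hane.symm, ha2, ha2s⟩
      · exact ⟨a1, h, ha1, ha1s⟩
    obtain ⟨a'', ha''ne, ha''adj, ha''s⟩ := hpick
    have ha''A : a'' ∈ A := hbip.memA ha''adj hc1B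
    have hle : x a ≤ x a'' := hmin a'' (by simp [ha''s, ha''A])
    have hlt : x a < x a'' :=
      lt_of_le_of_ne hle (fun h => ha''ne (hA ha''A haA h.symm))
    exact hnc (a, c2) (a'', c1) ⟨haA, hc2B, hac2⟩ ⟨ha''A, hc1B, ha''adj.symm⟩
      (mul_neg_of_neg_of_pos (sub_neg.mpr hlt) (sub_pos.mpr hxlt))
  have hxne : x b1 ≠ x b2 := fun h => hbne (hB hb1B hb2B h)
  rcases hxne.lt_or_gt with h | h
  · exact key b1 b2 hab1 hab2 hb1s hb1B hb2B h
  · exact key b2 b1 hab2 hab1 hb2s hb2B hb1B h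

lemma no_three (hbip : IsBipartition G A B)
    (hA : Set.InjOn x A) (hB : Set.InjOn x B)
    (hnc : ∀ e f : V × V, IsDrawnEdge G A B e → IsDrawnEdge G A B f → ¬ Crosses x e f)
    {v p1 p2 p3 : V} (hvA : v ∈ A)
    (h1 : G.Adj v p1) (h2 : G.Adj v p2) (h3 : G.Adj v p3)
    (h12 : p1 ≠ p2) (h13 : p1 ≠ p3) (h23 : p2 ≠ p3)
    (hw1 : ∃ w, G.Adj p1 w ∧ w ≠ v) (hw2 : ∃ w, G.Adj p2 w ∧ w ≠ v)
    (hw3 : ∃ w, G.Adj p3 w ∧ w ≠ v) : False := by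
  have hB1 : p1 ∈ B := hbip.memB h1 hvA
  have hB2 : p2 ∈ B := hbip.memB h2 hvA
  have hB3 : p3 ∈ B := hbip.memB h3 hvA
  have main : ∀ p q r : V, G.Adj v p → G.Adj v q → G.Adj v r →
      x p < x q → x q < x r → (∃ w, G.Adj q w ∧ w ≠ v) → False := by
    rintro p q r hp hq hr hpq hqr ⟨w, hqw, hwv⟩
    have hpB := hbip.memB hp hvA
    have hqB := hbip.memB hq hvA
    have hrB := hbip.memB hr hvA
    have hwA := hbip.memA hqw hqB
    have hxwv : x w ≠ x v := fun h => hwv (hA hwA hvA h)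
    rcases hxwv.lt_or_gt with hlt | hlt
    · exact hnc (v, p) (w, q) ⟨hvA, hpB, hp⟩ ⟨hwA, hqB, hqw.symm⟩
        (mul_neg_of_pos_of_neg (sub_pos.mpr hlt) (sub_neg.mpr hpq))
    · exact hnc (v, r) (w, q) ⟨hvA, hrB, hr⟩ ⟨hwA, hqB, hqw.symm⟩
        (mul_neg_of_neg_of_pos (sub_neg.mpr hlt) (sub_pos.mpr hqr))
  have x12 : x p1 ≠ x p2 := fun h => h12 (hB hB1 hB2 h)
  have x13 : x p1 ≠ x p3 := fun h => h13 (hB hB1 hB3 h)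
  have x23 : x p2 ≠ x p3 := fun h => h23 (hB hB2 hB3 h)
  rcases x12.lt_or_gt with a12 | a12 <;> rcases x13.lt_or_gt with a13 | a13 <;>
    rcases x23.lt_or_gt with a23 | a23
  · exact main p1 p2 p3 h1 h2 h3 a12 a23 hw2
  · exact main p1 p3 p2 h1 h3 h2 a13 a23 hw3
  · linarith
  · exact main p3 p1 p2 h3 h1 h2 a13 a12 hw1
  · exact main p2 p1 p3 h2 h1 h3 a12 a13 hw1
  · linarith
  · exact main p2 p3 p1 h2 h3 h1 a23 a13 hw3
  · exact main p3 p2 p1 h3 h2 h1 a23 a12 hw2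

end Aux3
section Aux4

open SimpleGraph Walk

variable {V : Type*} {G : SimpleGraph V} {A B : Set V} {x : V → ℝ} {a b u v w : V}

lemma caterpillar_of_noncross [Fintype V] (hconn : G.Connected)
    (hbip : IsBipartition G A B)
    (hA : Set.InjOn x A) (hB : Set.InjOn x B)
    (hnc : ∀ e f : V × V, IsDrawnEdge G A B e → IsDrawnEdge G A B f → ¬ Crosses x e f) :
    IsCaterpillar G := by
  classical
  have hacyc : G.IsAcyclic := acyclic_of_noncross hbip hA hB hnc
  set S : Set V := {v | (G.neighborSet v).ncard ≠ 1} with hS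
  refine ⟨⟨hconn, hacyc⟩, ?_, ?_, ?_⟩
  · -- induced acyclic
    intro v c hc
    exact hacyc (c.map (SimpleGraph.Embedding.induce (G := G) S).toHom)
      (hc.map (SimpleGraph.Embedding.induce (G := G) S).injective)
  · -- empty or connected
    by_cases hSe : S = (∅ : Set V)
    · exact Or.inl hSe
    · right
      obtain ⟨s1, hs1⟩ := Set.nonempty_iff_ne_empty.mpr hSe
      rw [SimpleGraph.connected_iff]
      refine ⟨?_, ⟨⟨s1, hs1⟩⟩⟩
      rintro ⟨t1, ht1⟩ ⟨t2, ht2⟩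
      obtain ⟨p⟩ := hconn.preconnected t1 t2
      have hsup : ∀ w ∈ p.bypass.support, w ∈ S := by
        intro w hw
        by_cases hw1 : w = t1
        · exact hw1 ▸ ht1
        by_cases hw2 : w = t2
        · exact hw2 ▸ ht2
        exact internal_mem_S p.bypass_isPath hw hw1 hw2
      exact reach_induce p.bypass hsup ht1 ht2
  · -- degree bound
    rintro ⟨v, hv⟩
    by_contra hdeg
    push_neg at hdeg
    rw [show (2 : ℕ) < ((G.induce S).neighborSet ⟨v, hv⟩).ncard ↔ _ from
      Set.two_lt_ncard_iff (Set.toFinite _)] at hdeg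
    obtain ⟨u1, u2, u3, hu1, hu2, hu3, h12, h13, h23⟩ := hdeg
    have hadj1 : G.Adj v ↑u1 := hu1
    have hadj2 : G.Adj v ↑u2 := hu2
    have hadj3 : G.Adj v ↑u3 := hu3
    have hv12 : (u1 : V) ≠ ↑u2 := fun h => h12 (Subtype.ext h)
    have hv13 : (u1 : V) ≠ ↑u3 := fun h => h13 (Subtype.ext h)
    have hv23 : (u2 : V) ≠ ↑u3 := fun h => h23 (Subtype.ext h)
    have hsecond : ∀ z : ↥S, G.Adj v ↑z → ∃ w, G.Adj ↑z w ∧ w ≠ v := by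
      rintro ⟨z, hz⟩ hadj
      have hzS : (G.neighborSet z).ncard ≠ 1 := hz
      have hpos : 0 < (G.neighborSet z).ncard := by
        rw [Set.ncard_pos (Set.toFinite _)]
        exact ⟨v, hadj.symm⟩
      have h1lt : 1 < (G.neighborSet z).ncard := by omega
      obtain ⟨w, hw, hwv⟩ := Set.exists_ne_of_one_lt_ncard h1lt v
      exact ⟨w, hw, hwv⟩
    have hw1 := hsecond u1 hadj1
    have hw2 := hsecond u2 hadj2
    have hw3 := hsecond u3 hadj3
    rcases hbip.mem_or v with hvA | hvB
    · exact no_three hbip hA hB hnc hvA hadj1 hadj2 hadj3 hv12 hv13 hv23 hw1 hw2 hw3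
    · have hnc' : ∀ e f : V × V, IsDrawnEdge G B A e → IsDrawnEdge G B A f →
          ¬ Crosses x e f := by
        rintro e f ⟨he1, he2, he3⟩ ⟨hf1, hf2, hf3⟩ hcr
        apply hnc (e.2, e.1) (f.2, f.1) ⟨he2, he1, he3.symm⟩ ⟨hf2, hf1, hf3.symm⟩
        simpa [Crosses, mul_comm] using hcr
      exact no_three hbip.symm hB hA hnc' hvB hadj1 hadj2 hadj3 hv12 hv13 hv23 hw1 hw2 hw3
end Aux4
section Aux5

open SimpleGraph Walk

variable {V : Type*} {G : SimpleGraph V} {A B : Set V} {a b u v w : V}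

lemma exists_drawing [Fintype V] (hconn : G.Connected) (hbip : IsBipartition G A B)
    (hcat : IsCaterpillar G) :
    ∃ x : V → ℝ, Function.Injective x ∧
      ∀ e f : V × V, IsDrawnEdge G A B e → IsDrawnEdge G A B f → ¬ Crosses x e f := by
  classical
  set ε : V → ℝ := fun z => 1 / ((Fintype.equivFin V z : ℕ) + 2) with hεdef
  have hε0 : ∀ z, 0 < ε z := by
    intro z
    positivity
  have hε1 : ∀ z, ε z < 1 := by
    intro z
    rw [hεdef]
    rw [div_lt_one (by positivity)]
    have : (0:ℝ) ≤ ((Fintype.equivFin V z : ℕ) : ℝ) := Nat.cast_nonneg _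
    linarith
  have hεinj : Function.Injective ε := by
    intro z w h
    simp only [hεdef, one_div] at h
    have h3 : (Fintype.equivFin V z : ℕ) = (Fintype.equivFin V w : ℕ) := by
      field_simp at h
      exact_mod_cast (add_right_cancel h).symm
    exact (Fintype.equivFin V).injective (Fin.val_injective h3)
  by_cases hSall : ∀ z : V, (G.neighborSet z).ncard = 1
  · -- every vertex is a leaf: at most one edge
    refine ⟨fun z => ((Fintype.equivFin V z : ℕ) : ℝ), ?_, ?_⟩
    · intro z w h
      dsimp only at h
      have : (Fintype.equivFin V z : ℕ) = (Fintype.equivFin V w : ℕ) := by exact_mod_cast h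
      exact (Fintype.equivFin V).injective (Fin.val_injective this)
    · rintro e f ⟨he1, he2, he3⟩ ⟨hf1, hf2, hf3⟩ hcr
      have hsing : ∀ p q : V, G.Adj p q → G.neighborSet p = {q} := by
        intro p q hpq
        obtain ⟨c, hc⟩ := Set.ncard_eq_one.mp (hSall p)
        have : q ∈ G.neighborSet p := hpq
        rw [hc, Set.mem_singleton_iff] at this
        rw [hc, this]
      have hef : e = f := by
        have hmem := confined (hsing e.1 e.2 he3) (hsing e.2 e.1 he3.symm)
          (hconn.preconnected e.1 f.1).some (Set.mem_insert _ _)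
        rcases Set.mem_insert_iff.mp hmem with h | h
        · have : f.2 ∈ G.neighborSet e.1 := by
            rw [← h]
            exact hf3
          rw [hsing e.1 e.2 he3, Set.mem_singleton_iff] at this
          exact Prod.ext h.symm this.symm
        · rw [Set.mem_singleton_iff] at h
          exact (hbip.not_both hf1 (h ▸ he2)).elim
      rw [hef, Crosses, sub_self, zero_mul] at hcr
      exact lt_irrefl _ hcr
  · push_neg at hSall
    obtain ⟨s0, hs0⟩ := hSall
    have htree := hcat.1
    obtain ⟨u, huS, hu1⟩ := exists_endvertex htree hbip hs0
    have hdeg : ∀ w a b c : V, (G.neighborSet w).ncard ≠ 1 → (G.neighborSet a).ncard ≠ 1 →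
        (G.neighborSet b).ncard ≠ 1 → (G.neighborSet c).ncard ≠ 1 →
        G.Adj w a → G.Adj w b → G.Adj w c → a = b ∨ a = c ∨ b = c := by
      intro w a b c hw ha hb hc hwa hwb hwc
      by_contra hne
      push_neg at hne
      obtain ⟨hab, hac, hbc⟩ := hne
      have h2 := hcat.2.2.2 ⟨w, hw⟩
      have h3 : 2 < ((G.induce {v | (G.neighborSet v).ncard ≠ 1}).neighborSet ⟨w, hw⟩).ncard := by
        rw [Set.two_lt_ncard_iff (Set.toFinite _)]
        refine ⟨⟨a, ha⟩, ⟨b, hb⟩, ⟨c, hc⟩, hwa, hwb, hwc, ?_, ?_, ?_⟩ <;>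
          simp [Subtype.ext_iff, hab, hac, hbc]
      omega
    have hinj := sigma_inj hconn huS hu1 hdeg
    set σ : V → ℕ := fun z => G.dist u z with hσdef
    have hinjS : ∀ s t : V, (G.neighborSet s).ncard ≠ 1 → (G.neighborSet t).ncard ≠ 1 →
        σ s = σ t → s = t := fun s t hs ht h => hinj (σ s) s t hs ht rfl h.symm
    set N : V → V := fun z =>
      if h : (G.neighborSet z).ncard = 1 then (Set.ncard_eq_one.mp h).choose else z with hNdef
    have hN : ∀ z, (G.neighborSet z).ncard = 1 → G.neighborSet z = {N z} := by
      intro z hz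
      simp only [hNdef, dif_pos hz]
      exact (Set.ncard_eq_one.mp hz).choose_spec
    have hNadj : ∀ z, (G.neighborSet z).ncard = 1 → G.Adj z (N z) := by
      intro z hz
      have : N z ∈ G.neighborSet z := by
        rw [hN z hz]
        rfl
      exact this
    have hNS : ∀ z, (G.neighborSet z).ncard = 1 → (G.neighborSet (N z)).ncard ≠ 1 := by
      intro z hz h'
      have h1 : G.neighborSet z = {N z} := hN z hz
      have h2 : G.neighborSet (N z) = {z} := by
        have hc := hN (N z) h'
        have hmem : z ∈ G.neighborSet (N z) := (hNadj z hz).symm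
        rw [hc, Set.mem_singleton_iff] at hmem
        rw [hc, ← hmem]
      have hmem := confined h1 h2 (hconn.preconnected z s0).some (Set.mem_insert _ _)
      rcases Set.mem_insert_iff.mp hmem with h | h
      · exact hs0 (h ▸ hz)
      · rw [Set.mem_singleton_iff] at h
        exact hs0 (h ▸ h')
    set x : V → ℝ := fun z =>
      if (G.neighborSet z).ncard = 1 then (σ (N z) : ℝ) + ε z else (σ z : ℝ) with hxdef
    have hxS : ∀ z, (G.neighborSet z).ncard ≠ 1 → x z = (σ z : ℝ) := by
      intro z hz
      simp only [hxdef, if_neg hz]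
    have hxL : ∀ z, (G.neighborSet z).ncard = 1 → x z = (σ (N z) : ℝ) + ε z := by
      intro z hz
      simp only [hxdef, if_pos hz]
    have hstep : ∀ p q : V, G.Adj p q → σ q = σ p + 1 ∨ σ p = σ q + 1 :=
      fun p q h => dist_adj_cases hbip hconn h u
    -- injectivity of x
    have hxinj : Function.Injective x := by
      intro z w h
      by_cases hz : (G.neighborSet z).ncard = 1 <;> by_cases hw : (G.neighborSet w).ncard = 1
      · rw [hxL z hz, hxL w hw] at h
        by_cases hNzw : N z = N w
        · rw [hNzw] at h
          exact hεinj (by linarith)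
        · exfalso
          have hσne : σ (N z) ≠ σ (N w) := fun hh => hNzw (hinjS _ _ (hNS z hz) (hNS w hw) hh)
          have key : ∀ p q : V, (G.neighborSet p).ncard = 1 → (G.neighborSet q).ncard = 1 →
              σ (N p) < σ (N q) →
              (σ (N p) : ℝ) + ε p ≠ (σ (N q) : ℝ) + ε q := by
            intro p q hp hq hlt heq
            have h1 : (σ (N p) : ℝ) + 1 ≤ (σ (N q) : ℝ) := by exact_mod_cast hlt
            have := hε0 q
            have := hε1 p
            linarith
          rcases hσne.lt_or_gt with hlt | hlt
          · exact key z w hz hw hlt h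
          · exact key w z hw hz hlt h.symm
      · rw [hxL z hz, hxS w hw] at h
        exfalso
        have h1 : (σ (N z) : ℝ) < (σ w : ℝ) := by
          have := hε0 z
          linarith
        have h2 : (σ w : ℝ) < (σ (N z) : ℝ) + 1 := by
          have := hε1 z
          linarith
        have h1' : σ (N z) < σ w := by exact_mod_cast h1
        have h2' : σ w < σ (N z) + 1 := by exact_mod_cast h2
        omega
      · rw [hxS z hz, hxL w hw] at h
        exfalso
        have h1 : (σ (N w) : ℝ) < (σ z : ℝ) := by
          have := hε0 w
          linarith
        have h2 : (σ z : ℝ) < (σ (N w) : ℝ) + 1 := by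
          have := hε1 w
          linarith
        have h1' : σ (N w) < σ z := by exact_mod_cast h1
        have h2' : σ z < σ (N w) + 1 := by exact_mod_cast h2
        omega
      · rw [hxS z hz, hxS w hw] at h
        exact hinjS z w hz hw (by exact_mod_cast h)
    -- edge classification
    have hedge : ∀ p q : V, G.Adj p q → ∃ (m : ℕ) (s : V),
        (G.neighborSet s).ncard ≠ 1 ∧ σ s = m ∧ (s = p ∨ s = q) ∧
        (m:ℝ) ≤ x p ∧ x p ≤ m + 1 ∧ (m:ℝ) ≤ x q ∧ x q ≤ m + 1 := by
      intro p q hpq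
      by_cases hp : (G.neighborSet p).ncard = 1 <;> by_cases hq : (G.neighborSet q).ncard = 1
      · exfalso
        have : q ∈ G.neighborSet p := hpq
        rw [hN p hp, Set.mem_singleton_iff] at this
        exact hNS p hp (this ▸ hq)
      · -- p leaf, q spine
        have hNp : N p = q := by
          have : q ∈ G.neighborSet p := hpq
          rw [hN p hp, Set.mem_singleton_iff] at this
          exact this.symm
        refine ⟨σ q, q, hq, rfl, Or.inr rfl, ?_, ?_, ?_, ?_⟩
        · rw [hxL p hp, hNp]
          have := hε0 p
          linarith
        · rw [hxL p hp, hNp]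
          have := hε1 p
          linarith
        · rw [hxS q hq]
        · rw [hxS q hq]
          linarith
      · -- p spine, q leaf
        have hNq : N q = p := by
          have : p ∈ G.neighborSet q := hpq.symm
          rw [hN q hq, Set.mem_singleton_iff] at this
          exact this.symm
        refine ⟨σ p, p, hp, rfl, Or.inl rfl, ?_, ?_, ?_, ?_⟩
        · rw [hxS p hp]
        · rw [hxS p hp]
          linarith
        · rw [hxL q hq, hNq]
          have := hε0 q
          linarith
        · rw [hxL q hq, hNq]
          have := hε1 q
          linarith
      · -- both spine
        rcases hstep p q hpq with hst | hst
        · refine ⟨σ p, p, hp, rfl, Or.inl rfl, ?_, ?_, ?_, ?_⟩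
          · rw [hxS p hp]
          · rw [hxS p hp]
            linarith
          · rw [hxS q hq, hst]
            push_cast
            linarith
          · rw [hxS q hq, hst]
            push_cast
            linarith
        · refine ⟨σ q, q, hq, rfl, Or.inr rfl, ?_, ?_, ?_, ?_⟩
          · rw [hxS p hp, hst]
            push_cast
            linarith
          · rw [hxS p hp, hst]
            push_cast
            linarith
          · rw [hxS q hq]
          · rw [hxS q hq]
            linarith
    refine ⟨x, hxinj, ?_⟩
    rintro e f ⟨heA, heB, headj⟩ ⟨hfA, hfB, hfadj⟩ hcr
    by_cases h11 : e.1 = f.1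
    · rw [Crosses, h11, sub_self, zero_mul] at hcr
      exact lt_irrefl _ hcr
    by_cases h22 : e.2 = f.2
    · rw [Crosses, h22, sub_self, mul_zero] at hcr
      exact lt_irrefl _ hcr
    obtain ⟨m1, s1, hs1S, hs1σ, hs1mem, hb1a, hb1b, hb1c, hb1d⟩ := hedge e.1 e.2 headj
    obtain ⟨m2, s2, hs2S, hs2σ, hs2mem, hb2a, hb2b, hb2c, hb2d⟩ := hedge f.1 f.2 hfadj
    have hm : m1 ≠ m2 := by
      intro h
      have hseq : s1 = s2 := hinjS s1 s2 hs1S hs2S (by rw [hs1σ, hs2σ, h])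
      rcases hs1mem with h1 | h1 <;> rcases hs2mem with h2 | h2
      · exact h11 (by rw [← h1, hseq, h2])
      · exact hbip.not_both (show s1 ∈ A by rw [h1]; exact heA)
          (show s1 ∈ B by rw [hseq, h2]; exact hfB)
      · exact hbip.not_both (show s1 ∈ A by rw [hseq, h2]; exact hfA)
          (show s1 ∈ B by rw [h1]; exact heB)
      · exact h22 (by rw [← h1, hseq, h2])
    rw [Crosses] at hcr
    rcases hm.lt_or_gt with hlt | hlt
    · have h1 : (m1:ℝ) + 1 ≤ m2 := by exact_mod_cast hlt
      nlinarith
    · have h1 : (m2:ℝ) + 1 ≤ m1 := by exact_mod_cast hlt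
      nlinarith

end Aux5
theorem crossing_free_iff_caterpillar {V : Type*} [Fintype V]
    (G : SimpleGraph V) (hconn : G.Connected)
    (hbip : ∃ A B, IsBipartition G A B) :
    (∃ (A B : Set V) (x : V → ℝ), IsBipartition G A B ∧ IsTwoLayerDrawing A B x ∧
      ∀ e f : V × V, IsDrawnEdge G A B e → IsDrawnEdge G A B f →
        ¬ Crosses x e f) ↔
    IsCaterpillar G := by
  constructor
  · rintro ⟨A, B, x, hbip', ⟨hA, hB⟩, hnc⟩
    exact caterpillar_of_noncross hconn hbip' hA hB hnc
  · intro hcat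
    obtain ⟨A, B, hbip'⟩ := hbip
    obtain ⟨x, hxinj, hnc⟩ := exists_drawing hconn hbip' hcat
    exact ⟨A, B, x, hbip', ⟨hxinj.injOn, hxinj.injOn⟩, hnc⟩
end

section
/- A connected graph G has pathwidth 1 if and only if G is a caterpillar with at least one edge. -/
open SimpleGraph

section AuxWalk
variable {V : Type*} {G : SimpleGraph V}

/-- A walk starting in a mutually-exclusive adjacent pair stays in the pair. -/
lemma aux_reach_pair {u v : V} (hu : G.neighborSet u = {v}) (hv : G.neighborSet v = {u}) :
    ∀ {x w : V} (_ : G.Walk x w), x = u ∨ x = v → w = u ∨ w = v := by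
  intro x w p
  induction p with
  | nil => exact fun h => h
  | @cons a b c h q ih =>
    rintro (rfl | rfl)
    · have hb : b ∈ G.neighborSet a := h
      rw [hu] at hb
      exact ih (Or.inr hb)
    · have hb : b ∈ G.neighborSet a := h
      rw [hv] at hb
      exact ih (Or.inl hb)

lemma aux_isPath_loop {x : V} (p : G.Walk x x) (hp : p.IsPath) : p.length = 0 := by
  cases p with
  | nil => rfl
  | cons h q =>
    rw [Walk.cons_isPath_iff] at hp
    exact absurd q.end_mem_support hp.2

/-- In an acyclic graph, adjacent vertices are not joined by a path of length ≥ 2. -/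
lemma aux_no_path_of_adj (hG : G.IsAcyclic) {a b : V}
    (r : G.Walk a b) (hr : r.IsPath) (h2 : 2 ≤ r.length) (hab : G.Adj b a) : False := by
  have hnot : s(b, a) ∉ r.edges := by
    intro hmem
    cases r with
    | nil => simp at h2
    | @cons _ z _ h₁ r₁ =>
      rw [Walk.edges_cons, List.mem_cons] at hmem
      have hr₁ : r₁.IsPath := (Walk.cons_isPath_iff _ _).1 hr |>.1
      have hans : a ∉ r₁.support := ((Walk.cons_isPath_iff _ _).1 hr).2
      rcases hmem with heq | hmem
      · rw [Sym2.eq_iff] at heq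
        rcases heq with ⟨hba, _⟩ | ⟨hbz, -⟩
        · exact hab.ne hba
        · subst hbz
          have := aux_isPath_loop r₁ hr₁
          simp [Walk.length_cons, this] at h2
      · have : a ∈ r₁.support := by
          have := r₁.fst_mem_support_of_mem_edges (t := a) (u := b)
            (by rwa [Sym2.eq_swap] at hmem)
          exact this
        exact hans this
  exact hG _ ((Walk.cons_isCycle_iff r hab).2 ⟨hr, hnot⟩)

/-- An internal vertex of a path has two distinct neighbors on the path. -/
lemma aux_internal_two_nbrs {u v w : V} (p : G.Walk u v) (hp : p.IsPath)
    (hw : w ∈ p.support) (hwu : w ≠ u) (hwv : w ≠ v) :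
    ∃ x y, x ≠ y ∧ G.Adj w x ∧ G.Adj w y ∧ x ∈ p.support ∧ y ∈ p.support := by
  classical
  set q := p.takeUntil w hw with hq
  set r := p.dropUntil w hw with hr
  have hspec : q.append r = p := p.take_spec hw
  have hqpath : q.IsPath := hp.takeUntil hw
  have hrpath : r.IsPath := hp.dropUntil hw
  -- r is not nil since w ≠ v
  obtain ⟨y, hy_adj, r', hr'⟩ : ∃ (y : V) (h : G.Adj w y) (r' : G.Walk y v), r = Walk.cons h r' := by
    rw [← Walk.not_nil_iff]
    intro hnil
    exact hwv (Walk.Nil.eq hnil)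
  -- q.reverse is not nil since w ≠ u
  obtain ⟨x, hx_adj, q', hq'⟩ : ∃ (x : V) (h : G.Adj w x) (q' : G.Walk x u),
      q.reverse = Walk.cons h q' := by
    rw [← Walk.not_nil_iff]
    intro hnil
    exact hwu (Walk.Nil.eq hnil)
  have hxq : x ∈ q.support := by
    have : x ∈ q.reverse.support := by rw [hq']; simp [Walk.support_cons]
    rwa [Walk.support_reverse, List.mem_reverse] at this
  have hyr : y ∈ r.support.tail := by
    rw [hr']; simp [Walk.support_cons]
  have hnd : p.support.Nodup := hp.support_nodup
  have hsupp : p.support = q.support ++ r.support.tail := by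
    rw [← hspec, Walk.support_append]
  rw [hsupp, List.nodup_append'] at hnd
  have hxy : x ≠ y := fun h => hnd.2.2 hxq (h ▸ hyr)
  refine ⟨x, y, hxy, hx_adj, hy_adj, ?_, ?_⟩
  · rw [hsupp]; exact List.mem_append_left _ hxq
  · rw [hsupp]; exact List.mem_append_right _ hyr

/-- Transfer a walk staying inside `s` to the induced subgraph. -/
lemma aux_reachable_induce {s : Set V} :
    ∀ {u v : V} (p : G.Walk u v) (hsup : ∀ w ∈ p.support, w ∈ s),
    (G.induce s).Reachable ⟨u, hsup u p.start_mem_support⟩ ⟨v, hsup v p.end_mem_support⟩ := by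
  intro u v p
  induction p with
  | nil => intro _; rfl
  | @cons a b c h q ih =>
    intro hsup
    have hb : b ∈ s := hsup b (by simp)
    have hadj : (G.induce s).Adj ⟨a, hsup a (Walk.start_mem_support _)⟩ ⟨b, hb⟩ := h
    exact hadj.reachable.trans (ih (fun w hw => hsup w (by simp [hw])))

end AuxWalk

lemma caterpillar_of_decomp {V : Type*} [Fintype V] {G : SimpleGraph V}
    (hconn : G.Connected) {n : ℕ} {Bags : Fin n → Finset V}
    (hdec : IsPathDecomp G Bags) (hcard : ∀ i, (Bags i).card ≤ 2) :
    IsCaterpillar G := by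
  classical
  obtain ⟨hcov, hint, hedge⟩ := hdec
  have hne : ∀ v : V, (Finset.univ.filter (fun i => v ∈ Bags i)).Nonempty := by
    intro v; obtain ⟨i, hi⟩ := hcov v; exact ⟨i, by simp [hi]⟩
  set fst : V → Fin n := fun v => (Finset.univ.filter (fun i => v ∈ Bags i)).min' (hne v) with hfst
  set lst : V → Fin n := fun v => (Finset.univ.filter (fun i => v ∈ Bags i)).max' (hne v) with hlst
  have hself : ∀ v, v ∈ Bags (fst v) := by
    intro v
    have := Finset.min'_mem (Finset.univ.filter (fun i => v ∈ Bags i)) (hne v)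
    simpa [hfst] using this
  have hselfl : ∀ v, v ∈ Bags (lst v) := by
    intro v
    have := Finset.max'_mem (Finset.univ.filter (fun i => v ∈ Bags i)) (hne v)
    simpa [hlst] using this
  have hmem : ∀ v i, v ∈ Bags i ↔ fst v ≤ i ∧ i ≤ lst v := by
    intro v i
    constructor
    · intro h
      exact ⟨Finset.min'_le _ _ (by simp [h]), Finset.le_max' _ _ (by simp [h])⟩
    · rintro ⟨h1, h2⟩
      exact hint _ _ _ h1 h2 v (hself v) (hselfl v)
  have hK3 : ∀ {u v : V}, G.Adj u v → fst u ≤ fst v → u ∈ Bags (fst v) := by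
    intro u v huv hle
    obtain ⟨i, hiu, hiv⟩ := hedge u v huv
    rw [hmem]
    exact ⟨hle, le_trans ((hmem v i).1 hiv).1 ((hmem u i).1 hiu).2⟩
  have bag3 : ∀ {u x y : V}, G.Adj u x → G.Adj u y → x ≠ y →
      fst x ≤ fst u → fst y ≤ fst u → False := by
    intro u x y hux huy hxy h1 h2
    have hx := hK3 hux.symm h1
    have hy := hK3 huy.symm h2
    have hsub : ({u, x, y} : Finset V) ⊆ Bags (fst u) := by
      intro z hz
      simp only [Finset.mem_insert, Finset.mem_singleton] at hz
      rcases hz with rfl | rfl | rfl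
      · exact hself z
      · exact hx
      · exact hy
    have hc3 : ({u, x, y} : Finset V).card = 3 := by
      rw [Finset.card_insert_of_notMem (by simp [hux.ne, huy.ne]), Finset.card_pair hxy]
    have := Finset.card_le_card hsub
    have := hcard (fst u)
    omega
  have path_killer : ∀ {a b : V} (q : G.Walk a b), q.IsPath → 2 ≤ q.length →
      G.Adj b a → False := by
    intro a b q hq hlen hba
    obtain ⟨u, hu_mem, hu_max⟩ := Finset.exists_max_image q.support.toFinset
      (fun w => fst w) ⟨a, by simp⟩
    rw [List.mem_toFinset] at hu_mem
    have hu_max' : ∀ w ∈ q.support, fst w ≤ fst u := fun w hw =>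
      hu_max w (List.mem_toFinset.2 hw)
    by_cases hua : u = a
    · subst hua
      obtain ⟨z, hz_adj, q', hq'⟩ : ∃ (z : V) (h : G.Adj u z) (q' : G.Walk z b),
          q = Walk.cons h q' := by
        rw [← Walk.not_nil_iff, Walk.not_nil_iff_lt_length]; omega
      have hzb : z ≠ b := by
        rintro rfl
        have hq'path : q'.IsPath := by
          rw [hq', Walk.cons_isPath_iff] at hq; exact hq.1
        have := aux_isPath_loop q' hq'path
        rw [hq', Walk.length_cons, this] at hlen; omega
      refine bag3 hz_adj hba.symm hzb (hu_max' z ?_) (hu_max' b q.end_mem_support)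
      rw [hq']; simp
    by_cases hub : u = b
    · subst hub
      obtain ⟨z, hz_adj, q', hq'⟩ : ∃ (z : V) (h : G.Adj u z) (q' : G.Walk z a),
          q.reverse = Walk.cons h q' := by
        rw [← Walk.not_nil_iff, Walk.not_nil_iff_lt_length, Walk.length_reverse]; omega
      have hza : z ≠ a := by
        rintro rfl
        have hq'path : q'.IsPath := by
          have : q.reverse.IsPath := hq.reverse
          rw [hq', Walk.cons_isPath_iff] at this; exact this.1
        have := aux_isPath_loop q' hq'path
        have hlr : q.reverse.length = q.length := Walk.length_reverse _
        rw [hq', Walk.length_cons, this] at hlr; omega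
      have hzsup : z ∈ q.support := by
        have : z ∈ q.reverse.support := by rw [hq']; simp
        rwa [Walk.support_reverse, List.mem_reverse] at this
      exact bag3 hz_adj hba hza (hu_max' z hzsup) (hu_max' a q.start_mem_support)
    · obtain ⟨x, y, hxy, hwx, hwy, hxs, hys⟩ := aux_internal_two_nbrs q hq hu_mem hua hub
      exact bag3 hwx hwy hxy (hu_max' x hxs) (hu_max' y hys)
  have hac : G.IsAcyclic := by
    intro v c hc
    cases c with
    | nil => exact hc.ne_nil rfl
    | cons h q =>
      have h3 := hc.three_le_length
      rw [Walk.cons_isCycle_iff] at hc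
      refine path_killer q hc.1 ?_ h
      rw [Walk.length_cons] at h3; omega
  set S : Set V := {v | (G.neighborSet v).ncard ≠ 1} with hSdef
  have hC1 : (G.induce S).IsAcyclic := by
    intro v c hc
    exact hac _ ((Walk.map_isCycle_iff_of_injective
      (f := (SimpleGraph.Embedding.induce (G := G) S).toHom)
      (SimpleGraph.Embedding.induce (G := G) S).injective).2 hc)
  have hC2 : S = ∅ ∨ (G.induce S).Connected := by
    by_cases hS : S = ∅
    · exact Or.inl hS
    right
    have hSne : S.Nonempty := Set.nonempty_iff_ne_empty.2 hS
    haveI : Nonempty ↥S := hSne.to_subtype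
    refine ⟨?_⟩
    rintro ⟨a, haS⟩ ⟨b, hbS⟩
    obtain ⟨p0⟩ := hconn.preconnected a b
    set p : G.Walk a b := ↑p0.toPath with hpdef
    have hppath : p.IsPath := p0.toPath.2
    have hsupp : ∀ w ∈ p.support, w ∈ S := by
      intro w hw
      by_cases hwa : w = a
      · subst hwa; exact haS
      by_cases hwb : w = b
      · subst hwb; exact hbS
      obtain ⟨x, y, hxy, hwx, hwy, _, _⟩ := aux_internal_two_nbrs p hppath hw hwa hwb
      have h2 : 2 ≤ (G.neighborSet w).ncard := by
        have hsub : ({x, y} : Set V) ⊆ G.neighborSet w := by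
          rintro z (rfl | rfl)
          · exact hwx
          · exact hwy
        calc 2 = ({x, y} : Set V).ncard := (Set.ncard_pair hxy).symm
          _ ≤ _ := Set.ncard_le_ncard hsub (Set.toFinite _)
      simp only [hSdef, Set.mem_setOf_eq]
      omega
    exact aux_reachable_induce p hsupp
  have hC3 : ∀ v : S, ((G.induce S).neighborSet v).ncard ≤ 2 := by
    intro v
    by_contra hcon
    push_neg at hcon
    have hfin : ((G.induce S).neighborSet v).Finite := Set.toFinite _
    have hcon' : 2 < hfin.toFinset.card := by
      rwa [← Set.ncard_eq_toFinset_card _ hfin]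
    obtain ⟨a, b, c, ha, hb, hc, hab, hac', hbc⟩ := Finset.two_lt_card_iff.1 hcon'
    rw [Set.Finite.mem_toFinset] at ha hb hc
    -- adjacency in G
    have hva : G.Adj ↑v ↑a := ha
    have hvb : G.Adj ↑v ↑b := hb
    have hvc : G.Adj ↑v ↑c := hc
    have hab' : (a : V) ≠ ↑b := fun h => hab (Subtype.coe_injective h)
    have hac'' : (a : V) ≠ ↑c := fun h => hac' (Subtype.coe_injective h)
    have hbc' : (b : V) ≠ ↑c := fun h => hbc (Subtype.coe_injective h)
    -- bags for each edge
    have getbag : ∀ {x : V}, G.Adj ↑v x → ∃ j, Bags j = {↑v, x} := by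
      intro x hx
      obtain ⟨j, hjv, hjx⟩ := hedge _ _ hx
      refine ⟨j, ?_⟩
      have hsub : ({↑v, x} : Finset V) ⊆ Bags j := by
        intro z hz
        simp only [Finset.mem_insert, Finset.mem_singleton] at hz
        rcases hz with rfl | rfl
        · exact hjv
        · exact hjx
      exact (Finset.eq_of_subset_of_card_le hsub
        (by rw [Finset.card_pair hx.ne]; exact hcard j)).symm
    obtain ⟨ja, hja⟩ := getbag hva
    obtain ⟨jb, hjb⟩ := getbag hvb
    obtain ⟨jc, hjc⟩ := getbag hvc
    -- the middle one kills it
    have key : ∀ (x y z : V) (jx jy jz : Fin n), G.Adj ↑v x → G.Adj ↑v y → G.Adj ↑v z →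
        x ≠ y → y ≠ z → y ∈ S → Bags jx = {↑v, x} → Bags jy = {↑v, y} → Bags jz = {↑v, z} →
        jx < jy → jy < jz → False := by
      intro x y z jx jy jz hx hy hz hxy hyz hyS hbx hby hbz h1 h2
      -- y has a neighbor w ≠ v
      obtain ⟨w, hw_adj, hw_ne⟩ : ∃ w, G.Adj y w ∧ w ≠ ↑v := by
        by_contra hno
        push_neg at hno
        have hsub : G.neighborSet y ⊆ {↑v} := by
          intro t ht; exact hno t ht
        have h1' : (G.neighborSet y).ncard ≤ 1 := by
          calc (G.neighborSet y).ncard ≤ ({↑v} : Set V).ncard :=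
            Set.ncard_le_ncard hsub (Set.toFinite _)
          _ = 1 := Set.ncard_singleton _
        have h2' : 0 < (G.neighborSet y).ncard := by
          rw [Set.ncard_pos (Set.toFinite _)]
          exact ⟨↑v, hy.symm⟩
        have := hyS
        simp only [hSdef, Set.mem_setOf_eq] at this
        omega
      obtain ⟨j, hjy, hjw⟩ := hedge _ _ hw_adj
      have hbagj : Bags j = {y, w} := by
        have hsub : ({y, w} : Finset V) ⊆ Bags j := by
          intro t ht
          simp only [Finset.mem_insert, Finset.mem_singleton] at ht
          rcases ht with rfl | rfl
          · exact hjy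
          · exact hjw
        exact (Finset.eq_of_subset_of_card_le hsub
          (by rw [Finset.card_pair hw_adj.ne]; exact hcard j)).symm
      have hy_jy : y ∈ Bags jy := by rw [hby]; simp
      -- fst y > jx
      have hfy : jx < fst y := by
        by_contra hle
        push_neg at hle
        have : y ∈ Bags jx := (hmem y jx).2 ⟨hle, le_trans (le_of_lt h1) ((hmem y jy).1 hy_jy).2⟩
        rw [hbx] at this
        simp only [Finset.mem_insert, Finset.mem_singleton] at this
        rcases this with rfl | rfl
        · exact hy.ne rfl
        · exact hxy rfl
      have hly : lst y < jz := by
        by_contra hle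
        push_neg at hle
        have : y ∈ Bags jz := (hmem y jz).2 ⟨le_trans ((hmem y jy).1 hy_jy).1 (le_of_lt h2), hle⟩
        rw [hbz] at this
        simp only [Finset.mem_insert, Finset.mem_singleton] at this
        rcases this with rfl | rfl
        · exact hy.ne rfl
        · exact hyz rfl
      have hjbounds := (hmem y j).1 hjy
      have hj1 : jx < j := lt_of_lt_of_le hfy hjbounds.1
      have hj2 : j < jz := lt_of_le_of_lt hjbounds.2 hly
      have hvj : ↑v ∈ Bags j := by
        refine hint jx j jz (le_of_lt hj1) (le_of_lt hj2) _ ?_ ?_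
        · rw [hbx]; simp
        · rw [hbz]; simp
      rw [hbagj] at hvj
      simp only [Finset.mem_insert, Finset.mem_singleton] at hvj
      rcases hvj with rfl | rfl
      · exact hy.ne rfl
      · exact hw_ne rfl
    -- distinctness of bags indices
    have hjab : ja ≠ jb := by
      intro h
      rw [h, hjb] at hja
      have : (a : V) ∈ ({↑v, ↑b} : Finset V) := by rw [hja]; simp
      simp only [Finset.mem_insert, Finset.mem_singleton] at this
      rcases this with h' | h'
      · exact hva.ne' h'
      · exact hab' h'
    have hjac : ja ≠ jc := by
      intro h
      rw [h, hjc] at hja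
      have : (a : V) ∈ ({↑v, ↑c} : Finset V) := by rw [hja]; simp
      simp only [Finset.mem_insert, Finset.mem_singleton] at this
      rcases this with h' | h'
      · exact hva.ne' h'
      · exact hac'' h'
    have hjbc : jb ≠ jc := by
      intro h
      rw [h, hjc] at hjb
      have : (b : V) ∈ ({↑v, ↑c} : Finset V) := by rw [hjb]; simp
      simp only [Finset.mem_insert, Finset.mem_singleton] at this
      rcases this with h' | h'
      · exact hvb.ne' h'
      · exact hbc' h'
    rcases lt_trichotomy ja jb with h1 | h1 | h1
    · rcases lt_trichotomy jb jc with h2 | h2 | h2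
      · exact key _ _ _ ja jb jc hva hvb hvc hab' hbc' b.2 hja hjb hjc h1 h2
      · exact hjbc h2
      · rcases lt_trichotomy ja jc with h3 | h3 | h3
        · exact key _ _ _ ja jc jb hva hvc hvb hac'' (Ne.symm hbc') c.2 hja hjc hjb h3 h2
        · exact hjac h3
        · exact key _ _ _ jc ja jb hvc hva hvb (Ne.symm hac'') hab' a.2 hjc hja hjb h3 h1
    · exact hjab h1
    · rcases lt_trichotomy ja jc with h2 | h2 | h2
      · exact key _ _ _ jb ja jc hvb hva hvc (Ne.symm hab') hac'' a.2 hjb hja hjc h1 h2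
      · exact hjac h2
      · rcases lt_trichotomy jb jc with h3 | h3 | h3
        · exact key _ _ _ jb jc ja hvb hvc hva hbc' (Ne.symm hac'') c.2 hjb hjc hja h3 h2
        · exact hjbc h3
        · exact key _ _ _ jc jb ja hvc hvb hva (Ne.symm hbc') (Ne.symm hab') b.2 hjc hjb hja h3 h1
  exact ⟨⟨hconn, hac⟩, hC1, hC2, hC3⟩

lemma aux_boundary {V : Type*} {G : SimpleGraph V} {s : Set V} :
    ∀ {w u : V} (_ : G.Walk w u), u ∈ s → w ∉ s →
      ∃ w' x, G.Adj x w' ∧ w' ∉ s ∧ x ∈ s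
  | _, _, Walk.nil, hu, hw => absurd hu hw
  | w, u, @Walk.cons _ _ _ b _ h q, hu, hw => by
    classical
    by_cases hb : b ∈ s
    · exact ⟨w, b, h.symm, hw, hb⟩
    · exact aux_boundary q hu hb

lemma exists_hamiltonian_list {α : Type*} [Fintype α] [Nonempty α]
    {T : SimpleGraph α} (hconn : T.Connected) (hac : T.IsAcyclic)
    (hdeg : ∀ v, (T.neighborSet v).ncard ≤ 2) :
    ∃ l : List α, l.Nodup ∧ (∀ a, a ∈ l) ∧
      ∀ x y, T.Adj x y → ∃ l₁ l₂, l = l₁ ++ x :: y :: l₂ ∨ l = l₁ ++ y :: x :: l₂ := by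
  classical
  -- a maximum-length path
  set Lset : Set ℕ := {L | ∃ (u v : α) (p : T.Walk u v), p.IsPath ∧ p.length = L} with hLset
  have h0 : 0 ∈ Lset := by
    obtain ⟨u⟩ := ‹Nonempty α›
    exact ⟨u, u, Walk.nil, Walk.IsPath.nil, rfl⟩
  have hbdd : BddAbove Lset := by
    refine ⟨Fintype.card α, ?_⟩
    rintro L ⟨u, v, p, hp, rfl⟩
    exact le_of_lt hp.length_lt
  obtain ⟨u, v, p, hp, hplen⟩ := Nat.sSup_mem ⟨0, h0⟩ hbdd
  have hmax : ∀ {a b : α} (q : T.Walk a b), q.IsPath → q.length ≤ sSup Lset := by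
    intro a b q hq
    exact le_csSup hbdd ⟨a, b, q, hq, rfl⟩
  -- the path covers all vertices
  have hcov : ∀ w, w ∈ p.support := by
    by_contra hcon
    push_neg at hcon
    obtain ⟨w0, hw0⟩ := hcon
    -- find a boundary pair
    obtain ⟨q0⟩ := hconn.preconnected w0 u
    obtain ⟨w', x, hadj, hw', hx⟩ :=
      aux_boundary (s := {w | w ∈ p.support}) q0 p.start_mem_support hw0
    by_cases hxu : x = u
    · subst hxu
      have hnew : (Walk.cons hadj.symm p).IsPath := hp.cons hw'
      have := hmax _ hnew
      rw [Walk.length_cons, hplen] at this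
      omega
    by_cases hxv : x = v
    · subst hxv
      have hrev : p.reverse.IsPath := hp.reverse
      have hw'' : w' ∉ p.reverse.support := by
        rwa [Walk.support_reverse, List.mem_reverse]
      have hnew : (Walk.cons hadj.symm p.reverse).IsPath := hrev.cons hw''
      have := hmax _ hnew
      rw [Walk.length_cons, Walk.length_reverse, hplen] at this
      omega
    · obtain ⟨n₁, n₂, h12, hn1, hn2, hs1, hs2⟩ := aux_internal_two_nbrs p hp hx hxu hxv
      have hne1 : n₁ ≠ w' := fun h => hw' (h ▸ hs1)
      have hne2 : n₂ ≠ w' := fun h => hw' (h ▸ hs2)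
      have hsub : ({n₁, n₂, w'} : Set α) ⊆ T.neighborSet x := by
        rintro z (rfl | rfl | rfl)
        · exact hn1
        · exact hn2
        · exact hadj
      have hcard3 : ({n₁, n₂, w'} : Set α).ncard = 3 := by
        rw [Set.ncard_insert_of_notMem (by simp [h12, hne1]) (Set.toFinite _),
          Set.ncard_pair hne2]
      have hle := Set.ncard_le_ncard hsub (Set.toFinite _)
      have := hdeg x
      omega
  -- adjacency implies consecutive in the support of a path
  have adj_consec : ∀ {a b : α} (q : T.Walk a b), q.IsPath → ∀ {x y}, T.Adj x y →
      x ∈ q.support → y ∈ q.support →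
      ∃ l₁ l₂, q.support = l₁ ++ x :: y :: l₂ ∨ q.support = l₁ ++ y :: x :: l₂ := by
    intro a b q
    induction q with
    | nil =>
      intro _ x y hxy hx hy
      simp only [Walk.support_nil, List.mem_singleton] at hx hy
      exact absurd (hx.trans hy.symm) hxy.ne
    | @cons a z b h q ih =>
      intro hq x y hxy hx hy
      have hqpath : q.IsPath := ((Walk.cons_isPath_iff _ _).1 hq).1
      have hans : a ∉ q.support := ((Walk.cons_isPath_iff _ _).1 hq).2
      rw [Walk.support_cons] at hx hy ⊢
      by_cases hxa : x = a
      · subst hxa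
        have hyne : y ≠ x := hxy.ne'
        have hyq : y ∈ q.support := by
          rcases List.mem_cons.1 hy with h' | h'
          · exact absurd h' hyne
          · exact h'
        by_cases hyz : y = z
        · subst hyz
          refine ⟨[], q.support.tail, Or.inl ?_⟩
          rw [List.nil_append]
          exact congrArg _ q.support_eq_cons
        · exfalso
          have htk : (q.takeUntil y hyq).IsPath := hqpath.takeUntil hyq
          have hxs : x ∉ (q.takeUntil y hyq).support :=
            fun hmem => hans (q.support_takeUntil_subset hyq hmem)
          have hlen : 1 ≤ (q.takeUntil y hyq).length := by
            by_contra hl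
            push_neg at hl
            interval_cases hl' : (q.takeUntil y hyq).length
            exact hyz (Walk.eq_of_length_eq_zero hl').symm
          have hpath2 : (Walk.cons h (q.takeUntil y hyq)).IsPath := htk.cons hxs
          refine aux_no_path_of_adj hac _ hpath2 ?_ hxy.symm
          rw [Walk.length_cons]; omega
      by_cases hya : y = a
      · subst hya
        have hxne : x ≠ y := hxy.ne
        have hxq : x ∈ q.support := by
          rcases List.mem_cons.1 hx with h' | h'
          · exact absurd h' hxne
          · exact h'
        by_cases hxz : x = z
        · subst hxz
          refine ⟨[], q.support.tail, Or.inr ?_⟩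
          rw [List.nil_append]
          exact congrArg _ q.support_eq_cons
        · exfalso
          have htk : (q.takeUntil x hxq).IsPath := hqpath.takeUntil hxq
          have hys : y ∉ (q.takeUntil x hxq).support :=
            fun hmem => hans (q.support_takeUntil_subset hxq hmem)
          have hlen : 1 ≤ (q.takeUntil x hxq).length := by
            by_contra hl
            push_neg at hl
            interval_cases hl' : (q.takeUntil x hxq).length
            exact hxz (Walk.eq_of_length_eq_zero hl').symm
          have hpath2 : (Walk.cons h (q.takeUntil x hxq)).IsPath := htk.cons hys
          refine aux_no_path_of_adj hac _ hpath2 ?_ hxy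
          rw [Walk.length_cons]; omega
      · have hxq : x ∈ q.support := by
          rcases List.mem_cons.1 hx with h' | h'
          · exact absurd h' hxa
          · exact h'
        have hyq : y ∈ q.support := by
          rcases List.mem_cons.1 hy with h' | h'
          · exact absurd h' hya
          · exact h'
        obtain ⟨l₁, l₂, hl⟩ := ih hqpath hxy hxq hyq
        rcases hl with hl | hl
        · exact ⟨a :: l₁, l₂, Or.inl (by rw [hl]; simp)⟩
        · exact ⟨a :: l₁, l₂, Or.inr (by rw [hl]; simp)⟩
  refine ⟨p.support, hp.support_nodup, hcov, ?_⟩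
  intro x y hxy
  exact adj_consec p hp hxy (hcov x) (hcov y)

lemma pw1_of_caterpillar {V : Type*} [Fintype V] {G : SimpleGraph V}
    (hcat : IsCaterpillar G) : PathwidthAtMost G 1 := by
  classical
  obtain ⟨htree, hacS, hconnS, hdegS⟩ := hcat
  have hconn : G.Connected := htree.isConnected
  set S : Set V := {v | (G.neighborSet v).ncard ≠ 1} with hSdef
  have hSmem : ∀ v : V, v ∈ S ↔ (G.neighborSet v).ncard ≠ 1 := fun v => Iff.rfl
  by_cases hS : S = ∅
  · -- all degrees are 1 : the graph is a single edge
    have hdeg1 : ∀ v : V, (G.neighborSet v).ncard = 1 := by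
      intro v
      by_contra h
      have hv : v ∈ S := (hSmem v).2 h
      rw [hS] at hv
      exact hv
    haveI : Nonempty V := hconn.nonempty
    obtain ⟨v0⟩ := ‹Nonempty V›
    obtain ⟨u0, hu0⟩ := Set.ncard_eq_one.1 (hdeg1 v0)
    have hadj : G.Adj v0 u0 := by
      have : u0 ∈ G.neighborSet v0 := by rw [hu0]; rfl
      exact this
    have hnb_u0 : G.neighborSet u0 = {v0} := by
      obtain ⟨w, hw⟩ := Set.ncard_eq_one.1 (hdeg1 u0)
      have hmem : v0 ∈ G.neighborSet u0 := hadj.symm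
      rw [hw, Set.mem_singleton_iff] at hmem
      rw [hw, hmem]
    have hall : ∀ w : V, w = v0 ∨ w = u0 := by
      intro w
      obtain ⟨pw⟩ := hconn.preconnected v0 w
      exact aux_reach_pair hu0 hnb_u0 pw (Or.inl rfl)
    refine ⟨1, fun _ => Finset.univ, ⟨?_, ?_, ?_⟩, ?_⟩
    · exact fun v => ⟨0, Finset.mem_univ v⟩
    · intro i j l _ _ v _ _; exact Finset.mem_univ v
    · intro u v _; exact ⟨0, Finset.mem_univ _, Finset.mem_univ _⟩
    · intro i
      have hsub : (Finset.univ : Finset V) ⊆ {v0, u0} := by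
        intro w _
        rcases hall w with rfl | rfl <;> simp
      calc Finset.univ.card ≤ ({v0, u0} : Finset V).card := Finset.card_le_card hsub
        _ ≤ 2 := Finset.card_insert_le _ _ |>.trans (by simp)
  -- main case : the spine is nonempty
  have hSne : S.Nonempty := Set.nonempty_iff_ne_empty.2 hS
  haveI : Nonempty ↥S := hSne.to_subtype
  have hconnS' : (G.induce S).Connected := by
    rcases hconnS with h | h
    · exact absurd h hS
    · exact h
  obtain ⟨σl, hσnd, hσall, hσadj⟩ := exists_hamiltonian_list hconnS' hacS hdegS
  set sl : List V := σl.map Subtype.val with hsl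
  have hslnd : sl.Nodup := hσnd.map Subtype.val_injective
  have hmem_sl : ∀ v : V, v ∈ sl ↔ v ∈ S := by
    intro v
    constructor
    · intro hv
      obtain ⟨w, _, rfl⟩ := List.mem_map.1 hv
      exact w.2
    · intro hv
      exact List.mem_map.2 ⟨⟨v, hv⟩, hσall _, rfl⟩
  set leavesOf : V → List V := fun s =>
    (Finset.univ.filter (fun v => v ∉ S ∧ G.Adj s v)).toList with hlv
  have hmem_lv : ∀ s v : V, v ∈ leavesOf s ↔ (v ∉ S ∧ G.Adj s v) := by
    intro s v
    simp only [hlv, Finset.mem_toList, Finset.mem_filter, Finset.mem_univ, true_and]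
  have parent_unique : ∀ {v s s' : V}, v ∉ S → G.Adj s v → G.Adj s' v → s = s' := by
    intro v s s' hv h1 h2
    have hv1 : (G.neighborSet v).ncard = 1 := not_not.1 (fun h => hv ((hSmem v).2 h))
    obtain ⟨t, ht⟩ := Set.ncard_eq_one.1 hv1
    have h1' : s ∈ G.neighborSet v := h1.symm
    have h2' : s' ∈ G.neighborSet v := h2.symm
    rw [ht, Set.mem_singleton_iff] at h1' h2'
    rw [h1', h2']
  have parent_in_S : ∀ {v s : V}, v ∉ S → G.Adj s v → s ∈ S := by
    intro v s hv hadj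
    by_contra hs
    have hnv : G.neighborSet v = {s} := by
      obtain ⟨t, ht⟩ := Set.ncard_eq_one.1 (not_not.1 (fun h => hv ((hSmem v).2 h)))
      have hmem : s ∈ G.neighborSet v := hadj.symm
      rw [ht, Set.mem_singleton_iff] at hmem
      rw [ht, hmem]
    have hns : G.neighborSet s = {v} := by
      obtain ⟨t, ht⟩ := Set.ncard_eq_one.1 (not_not.1 (fun h => hs ((hSmem s).2 h)))
      have hmem : v ∈ G.neighborSet s := hadj
      rw [ht, Set.mem_singleton_iff] at hmem
      rw [ht, hmem]
    obtain ⟨t0, ht0⟩ := hSne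
    obtain ⟨pw⟩ := hconn.preconnected v t0
    rcases aux_reach_pair hnv hns pw (Or.inl rfl) with rfl | rfl
    · exact hv ht0
    · exact hs ht0
  set blk : V → List V := fun s => s :: leavesOf s with hblk
  set L : List V := sl.flatMap blk with hL
  have hLnd : L.Nodup := by
    rw [hL, List.nodup_flatMap]
    constructor
    · intro s hs
      simp only [hblk]
      refine List.nodup_cons.2 ⟨?_, ?_⟩
      · intro hmem
        exact ((hmem_lv s s).1 hmem).1 ((hmem_sl s).1 hs)
      · simp only [hlv]
        exact Finset.nodup_toList _
    · refine List.Pairwise.imp_of_mem ?_ hslnd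
      intro a b ha hb hab
      intro t ht1 ht2
      simp only [hblk] at ht1 ht2
      rcases List.mem_cons.1 ht1 with h1 | h1'
      · rcases List.mem_cons.1 ht2 with h2 | h2'
        · exact hab (h1.symm.trans h2)
        · exact ((hmem_lv b t).1 h2').1 ((hmem_sl t).1 (by rw [h1]; exact ha))
      · rcases List.mem_cons.1 ht2 with h2 | h2'
        · exact ((hmem_lv a t).1 h1').1 ((hmem_sl t).1 (by rw [h2]; exact hb))
        · exact hab (parent_unique ((hmem_lv a t).1 h1').1
            ((hmem_lv a t).1 h1').2 ((hmem_lv b t).1 h2').2)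
  have hLmem : ∀ v : V, v ∈ L := by
    intro v
    by_cases hv : v ∈ S
    · exact List.mem_flatMap.2 ⟨v, (hmem_sl v).2 hv, by simp only [hblk]; exact List.mem_cons_self⟩
    · have hv1 : (G.neighborSet v).ncard = 1 := not_not.1 (fun h => hv ((hSmem v).2 h))
      obtain ⟨t, ht⟩ := Set.ncard_eq_one.1 hv1
      have hadj : G.Adj t v := by
        have : t ∈ G.neighborSet v := by rw [ht]; rfl
        exact this.symm
      have htS : t ∈ S := parent_in_S hv hadj
      refine List.mem_flatMap.2 ⟨t, (hmem_sl t).2 htS, ?_⟩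
      simp only [hblk]
      exact List.mem_cons_of_mem _ ((hmem_lv t v).2 ⟨hv, hadj⟩)
  set pos : V → ℕ := fun v => List.idxOf v L with hpos
  set N : ℕ := L.length with hN
  have hposlt : ∀ v, pos v < N := fun v => List.idxOf_lt_length_iff.2 (hLmem v)
  set bnd : V → ℕ := fun v =>
    if v ∈ S then
      (if h : List.idxOf v sl + 1 < sl.length then
        List.idxOf (sl.get ⟨List.idxOf v sl + 1, h⟩) L
      else N - 1)
    else pos v with hbnd
  have pos_lt : ∀ (X Y : List V) (x y : V), L = X ++ x :: Y → y ∈ Y → pos x < pos y := by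
    intro X Y x y hXY hy
    have hnd := hLnd
    rw [hXY, List.nodup_append'] at hnd
    have hxX : x ∉ X := fun h => hnd.2.2 h (List.mem_cons_self)
    have hyX : y ∉ X := fun h => hnd.2.2 h (List.mem_cons_of_mem _ hy)
    have hyx : x ≠ y := by
      intro h
      exact (List.nodup_cons.1 hnd.2.1).1 (h ▸ hy)
    have e1 : pos x = X.length := by
      simp only [hpos]
      simp only [hXY, List.idxOf_append_of_notMem hxX, List.idxOf_cons_self, add_zero]
    have e2 : pos y = X.length + (List.idxOf y Y).succ := by
      simp only [hpos]
      simp only [hXY, List.idxOf_append_of_notMem hyX, List.idxOf_cons_ne _ hyx]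
    omega
  have hsplitL : ∀ (A B : List V) (x : V), sl = A ++ x :: B →
      L = A.flatMap blk ++ x :: (leavesOf x ++ B.flatMap blk) := by
    intro A B x hAB
    rw [hL, hAB, List.flatMap_append, List.flatMap_cons]
    simp only [hblk]
    simp [List.append_assoc]
  have pos_spine_lt : ∀ (A B : List V) (x y : V), sl = A ++ x :: B → y ∈ B →
      pos x < pos y := by
    intro A B x y h hy
    refine pos_lt _ _ _ _ (hsplitL A B x h) ?_
    refine List.mem_append_right _ ?_
    exact List.mem_flatMap.2 ⟨y, hy, by simp only [hblk]; exact List.mem_cons_self⟩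
  have pos_leaf_gt : ∀ (s v : V), s ∈ S → v ∈ leavesOf s → pos s < pos v := by
    intro s v hsS hv
    obtain ⟨A, B, hAB⟩ := List.append_of_mem ((hmem_sl s).2 hsS)
    refine pos_lt _ _ _ _ (hsplitL A B s hAB) ?_
    exact List.mem_append_left _ hv
  have pos_leaf_lt : ∀ (A B : List V) (x y v : V), sl = A ++ x :: y :: B →
      v ∈ leavesOf x → pos v < pos y := by
    intro A B x y v h hv
    obtain ⟨C, D, hCD⟩ := List.append_of_mem hv
    refine pos_lt (A.flatMap blk ++ x :: C) (D ++ (blk y ++ B.flatMap blk)) v y ?_ ?_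
    · rw [hL, h, List.flatMap_append, List.flatMap_cons, List.flatMap_cons]
      simp only [hblk]
      simp only [hCD]
      simp [List.append_assoc]
    · refine List.mem_append_right _ ?_
      refine List.mem_append_left _ ?_
      simp only [hblk]
      exact List.mem_cons_self
  have sl_idx : ∀ (A B : List V) (x : V), sl = A ++ x :: B → List.idxOf x sl = A.length := by
    intro A B x h
    have hnd := hslnd
    rw [h, List.nodup_append'] at hnd
    have hxA : x ∉ A := fun hm => hnd.2.2 hm (List.mem_cons_self)
    rw [h, List.idxOf_append_of_notMem hxA, List.idxOf_cons_self, add_zero]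
  have bnd_spine_next : ∀ (A B : List V) (x y : V), sl = A ++ x :: y :: B → bnd x = pos y := by
    intro A B x y h
    have hxS : x ∈ S := (hmem_sl x).1 (by rw [h]; simp)
    have hidx : List.idxOf x sl = A.length := sl_idx A (y :: B) x h
    have hlen : A.length + 1 < sl.length := by
      rw [h]
      simp only [List.length_append, List.length_cons]
      omega
    have hcond : List.idxOf x sl + 1 < sl.length := by rw [hidx]; exact hlen
    simp only [hbnd]
    simp only [if_pos hxS, dif_pos hcond]
    have hfin : (⟨List.idxOf x sl + 1, hcond⟩ : Fin sl.length) = ⟨A.length + 1, hlen⟩ := by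
      ext
      simp [hidx]
    rw [hfin]
    have hget : sl.get ⟨A.length + 1, hlen⟩ = y := by
      rw [List.get_eq_getElem, List.getElem_of_eq h,
        List.getElem_append_right (by omega : A.length ≤ A.length + 1)]
      simp
    rw [hget]
  have bnd_last : ∀ (A : List V) (x : V), sl = A ++ [x] → bnd x = N - 1 := by
    intro A x h
    have hxS : x ∈ S := (hmem_sl x).1 (by rw [h]; simp)
    have hidx : List.idxOf x sl = A.length := sl_idx A [] x h
    have hcond : ¬ (List.idxOf x sl + 1 < sl.length) := by
      rw [hidx, h]
      simp
    simp only [hbnd]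
    simp only [if_pos hxS, dif_neg hcond]
  have bnd_leaf : ∀ v : V, v ∉ S → bnd v = pos v := by
    intro v hv
    simp only [hbnd]
    simp only [if_neg hv]
  have hable : ∀ v, pos v ≤ bnd v := by
    intro v
    by_cases hv : v ∈ S
    · obtain ⟨A, B, hAB⟩ := List.append_of_mem ((hmem_sl v).2 hv)
      cases B with
      | nil =>
        rw [bnd_last A v hAB]
        have := hposlt v
        omega
      | cons w B' =>
        rw [bnd_spine_next A B' v w hAB]
        exact le_of_lt (pos_spine_lt A (w :: B') v w hAB (by simp))
    · rw [bnd_leaf v hv]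
  have leaf_le_bnd : ∀ (s v : V), s ∈ S → v ∈ leavesOf s → pos v ≤ bnd s := by
    intro s v hsS hv
    obtain ⟨A, B, hAB⟩ := List.append_of_mem ((hmem_sl s).2 hsS)
    cases B with
    | nil =>
      rw [bnd_last A s hAB]
      have := hposlt v
      omega
    | cons w B' =>
      rw [bnd_spine_next A B' s w hAB]
      exact le_of_lt (pos_leaf_lt A B' s w v hAB hv)
  have spine_clash : ∀ (x w : V) (i : ℕ), x ∈ S → w ∈ S → x ≠ w →
      pos x < i → i ≤ bnd x → pos w < i → i ≤ bnd w → False := by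
    have ordered : ∀ (A B : List V) (x w : V) (i : ℕ), sl = A ++ x :: B → w ∈ B →
        pos x < i → i ≤ bnd x → pos w < i → False := by
      intro A B x w i hAB hw h1 h2 h3
      cases B with
      | nil => simp at hw
      | cons y B' =>
        rw [bnd_spine_next A B' x y hAB] at h2
        rcases List.mem_cons.1 hw with rfl | hw'
        · omega
        · have : pos y < pos w := pos_spine_lt (A ++ [x]) B' y w (by rw [hAB]; simp) hw'
          omega
    intro x w i hxS hwS hxw h1 h2 h3 h4
    obtain ⟨A, B, hAB⟩ := List.append_of_mem ((hmem_sl x).2 hxS)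
    have hwsl := (hmem_sl w).2 hwS
    rw [hAB] at hwsl
    rcases List.mem_append.1 hwsl with hwA | hwB
    · obtain ⟨A', B', hA'B'⟩ := List.append_of_mem hwA
      have hre : sl = A' ++ w :: (B' ++ x :: B) := by
        rw [hAB, hA'B']
        simp
      exact ordered A' _ w x i hre (by simp) h3 h4 h1
    · rcases List.mem_cons.1 hwB with rfl | hwB'
      · exact hxw rfl
      · exact ordered A B x w i hAB hwB' h1 h2 h3
  have pos_inj : ∀ {x y : V}, pos x = pos y → x = y := by
    intro x y h
    exact (List.idxOf_inj (hLmem x)).1 h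
  refine ⟨N, fun i => Finset.univ.filter (fun v => pos v ≤ i.1 ∧ i.1 ≤ bnd v), ⟨?_, ?_, ?_⟩, ?_⟩
  · intro v
    exact ⟨⟨pos v, hposlt v⟩, by simp [hable v]⟩
  · intro i j l hij hjl v hvi hvl
    simp only [Finset.mem_filter, Finset.mem_univ, true_and] at hvi hvl ⊢
    have hij' : (i : ℕ) ≤ j := hij
    have hjl' : (j : ℕ) ≤ l := hjl
    omega
  · intro u v huv
    by_cases huS : u ∈ S <;> by_cases hvS : v ∈ S
    · -- both on the spine : they are consecutive
      have hadjT : (G.induce S).Adj ⟨u, huS⟩ ⟨v, hvS⟩ := huv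
      obtain ⟨l₁, l₂, hl⟩ := hσadj _ _ hadjT
      have hmap : sl = l₁.map Subtype.val ++ u :: v :: l₂.map Subtype.val ∨
          sl = l₁.map Subtype.val ++ v :: u :: l₂.map Subtype.val := by
        rcases hl with hl | hl
        · left; rw [hsl, hl]; simp
        · right; rw [hsl, hl]; simp
      rcases hmap with hm | hm
      · refine ⟨⟨pos v, hposlt v⟩, ?_, ?_⟩
        · simp only [Finset.mem_filter, Finset.mem_univ, true_and]
          exact ⟨le_of_lt (pos_spine_lt _ _ u v hm (by simp)),
            le_of_eq (bnd_spine_next _ _ u v hm).symm⟩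
        · simp [hable v]
      · refine ⟨⟨pos u, hposlt u⟩, ?_, ?_⟩
        · simp [hable u]
        · simp only [Finset.mem_filter, Finset.mem_univ, true_and]
          exact ⟨le_of_lt (pos_spine_lt _ _ v u hm (by simp)),
            le_of_eq (bnd_spine_next _ _ v u hm).symm⟩
    · -- u spine, v leaf
      have hv_leaf : v ∈ leavesOf u := (hmem_lv u v).2 ⟨hvS, huv⟩
      refine ⟨⟨pos v, hposlt v⟩, ?_, ?_⟩
      · simp only [Finset.mem_filter, Finset.mem_univ, true_and]
        exact ⟨le_of_lt (pos_leaf_gt u v huS hv_leaf), leaf_le_bnd u v huS hv_leaf⟩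
      · simp [hable v]
    · -- v spine, u leaf
      have hu_leaf : u ∈ leavesOf v := (hmem_lv v u).2 ⟨huS, huv.symm⟩
      refine ⟨⟨pos u, hposlt u⟩, ?_, ?_⟩
      · simp [hable u]
      · simp only [Finset.mem_filter, Finset.mem_univ, true_and]
        exact ⟨le_of_lt (pos_leaf_gt v u hvS hu_leaf), leaf_le_bnd v u hvS hu_leaf⟩
    · exact absurd (parent_in_S hvS huv) huS
  · intro i
    by_contra hcon
    push_neg at hcon
    obtain ⟨x, y, z, hx, hy, hz, hxy, hxz, hyz⟩ := Finset.two_lt_card_iff.1 (by exact hcon)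
    simp only [Finset.mem_filter, Finset.mem_univ, true_and] at hx hy hz
    have key2 : ∀ a b : V, (pos a ≤ i.1 ∧ i.1 ≤ bnd a) → (pos b ≤ i.1 ∧ i.1 ≤ bnd b) →
        a ≠ b → pos a < i.1 → pos b < i.1 → False := by
      intro a b ha hb hab h1 h2
      have haS : a ∈ S := by
        by_contra h
        rw [bnd_leaf a h] at ha
        omega
      have hbS : b ∈ S := by
        by_contra h
        rw [bnd_leaf b h] at hb
        omega
      exact spine_clash a b i.1 haS hbS hab h1 ha.2 h2 hb.2
    rcases eq_or_lt_of_le hx.1 with hxe | hxl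
    · rcases eq_or_lt_of_le hy.1 with hye | hyl
      · exact hxy (pos_inj (by omega))
      rcases eq_or_lt_of_le hz.1 with hze | hzl
      · exact hxz (pos_inj (by omega))
      · exact key2 y z hy hz hyz hyl hzl
    · rcases eq_or_lt_of_le hy.1 with hye | hyl
      · rcases eq_or_lt_of_le hz.1 with hze | hzl
        · exact hyz (pos_inj (by omega))
        · exact key2 x z hx hz hxz hxl hzl
      · exact key2 x y hx hy hxy hxl hyl

theorem pathwidth_eq_one_iff_caterpillar {V : Type*} [Fintype V]
    (G : SimpleGraph V) (hconn : G.Connected) :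
    pathwidth G = 1 ↔ (IsCaterpillar G ∧ ∃ u v, G.Adj u v) := by
  classical
  have htriv : PathwidthAtMost G (Fintype.card V) := by
    refine ⟨1, fun _ => Finset.univ, ⟨?_, ?_, ?_⟩, ?_⟩
    · exact fun v => ⟨0, Finset.mem_univ v⟩
    · intro i j l _ _ v _ _; exact Finset.mem_univ v
    · intro u v _; exact ⟨0, Finset.mem_univ _, Finset.mem_univ _⟩
    · intro i; rw [Finset.card_univ]; omega
  have hSne : {w | PathwidthAtMost G w}.Nonempty := ⟨_, htriv⟩
  constructor
  · intro h1
    have hmem : PathwidthAtMost G (pathwidth G) := Nat.sInf_mem hSne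
    rw [h1] at hmem
    have h0 : ¬ PathwidthAtMost G 0 := by
      intro h0
      have : pathwidth G ≤ 0 := Nat.sInf_le h0
      omega
    obtain ⟨n, Bags, hdec, hcard⟩ := hmem
    refine ⟨caterpillar_of_decomp hconn hdec hcard, ?_⟩
    by_contra hne
    push_neg at hne
    apply h0
    haveI : Subsingleton V := by
      constructor
      intro a b
      obtain ⟨p⟩ := hconn.preconnected a b
      cases p with
      | nil => rfl
      | cons h _ => exact absurd h (hne _ _)
    refine ⟨1, fun _ => Finset.univ, ⟨?_, ?_, ?_⟩, ?_⟩
    · exact fun v => ⟨0, Finset.mem_univ v⟩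
    · intro i j l _ _ v _ _; exact Finset.mem_univ v
    · intro a b h; exact absurd h (hne _ _)
    · intro i
      rw [Finset.card_univ]
      have := Fintype.card_le_one_iff_subsingleton.2 ‹Subsingleton V›
      omega
  · rintro ⟨hcat, u, v, huv⟩
    have h1 : PathwidthAtMost G 1 := pw1_of_caterpillar hcat
    have h0 : ¬ PathwidthAtMost G 0 := by
      rintro ⟨n, Bags, ⟨_, _, hedge⟩, hcard⟩
      obtain ⟨i, hiu, hiv⟩ := hedge u v huv
      have hsub : ({u, v} : Finset V) ⊆ Bags i := by
        intro z hz
        rcases Finset.mem_insert.1 hz with rfl | hz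
        · exact hiu
        · rw [Finset.mem_singleton] at hz
          exact hz ▸ hiv
      have hc := Finset.card_le_card hsub
      rw [Finset.card_pair huv.ne] at hc
      have := hcard i
      omega
    have hle : pathwidth G ≤ 1 := Nat.sInf_le h1
    have hne0 : pathwidth G ≠ 0 := by
      intro h
      have hmem : PathwidthAtMost G (pathwidth G) := Nat.sInf_mem hSne
      rw [h] at hmem
      exact h0 hmem
    omega
end

section
/- For every natural number h, the complete binary tree T_h of height h has a 2-layer drawing with no 3-crossing. -/
open SimpleGraph

/-- The complete binary tree of height `h`, with vertices indexed heap-style by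
`1, ..., 2^(h+1) - 1`: vertex `i` has children `2i` and `2i+1`. -/
def completeBinaryTree (h : ℕ) :
    SimpleGraph {i : Fin (2 ^ (h + 1)) // 1 ≤ (i : ℕ)} :=
  SimpleGraph.fromRel (fun u v => v.1.1 = 2 * u.1.1 ∨ v.1.1 = 2 * u.1.1 + 1)

private lemma log_child {u v : ℕ} (hu : 1 ≤ u) (hv : v = 2 * u ∨ v = 2 * u + 1) :
    Nat.log 2 v = Nat.log 2 u + 1 := by
  have h1 : 2 ^ Nat.log 2 u ≤ u := Nat.pow_log_le_self 2 (by omega)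
  have h2 : u < 2 ^ (Nat.log 2 u + 1) := Nat.lt_pow_succ_log_self (by norm_num) u
  apply Nat.log_eq_of_pow_le_of_lt_pow
  · rw [pow_succ]; omega
  · rw [pow_succ, pow_succ]; omega

private def ChildRel (a : ℕ × ℕ) : Prop := a.2 = 2 * a.1 ∨ a.2 = 2 * a.1 + 1

/-- two same-class parent-child pairs never "cross". -/
private lemma nocross1 {a b : ℕ × ℕ} (ha : ChildRel a) (hb : ChildRel b) :
    ¬ ((a.1 : ℝ) - b.1) * ((a.2 : ℝ) - b.2) < 0 := by
  obtain ⟨p, c⟩ := a; obtain ⟨q, d⟩ := b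
  simp only [ChildRel] at ha hb
  rcases lt_trichotomy p q with hpq | hpq | hpq
  · have hcd : c < d := by omega
    have h1 : (p : ℝ) < q := by exact_mod_cast hpq
    have h2 : (c : ℝ) < d := by exact_mod_cast hcd
    nlinarith
  · subst hpq; simp
  · have hcd : d < c := by omega
    have h1 : (q : ℝ) < p := by exact_mod_cast hpq
    have h2 : (d : ℝ) < c := by exact_mod_cast hcd
    nlinarith

private lemma no_three_s6 {a b c : ℕ × ℕ}
    (ha : ChildRel a ∨ ChildRel a.swap) (hb : ChildRel b ∨ ChildRel b.swap)
    (hc : ChildRel c ∨ ChildRel c.swap)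
    (hab : ((a.1 : ℝ) - b.1) * ((a.2 : ℝ) - b.2) < 0)
    (hac : ((a.1 : ℝ) - c.1) * ((a.2 : ℝ) - c.2) < 0)
    (hbc : ((b.1 : ℝ) - c.1) * ((b.2 : ℝ) - c.2) < 0) : False := by
  have swap2 : ∀ u v : ℕ × ℕ, ChildRel u.swap → ChildRel v.swap →
      ((u.1 : ℝ) - v.1) * ((u.2 : ℝ) - v.2) < 0 → False := by
    intro u v hu hv hlt
    exact nocross1 hu hv (by rw [mul_comm] at hlt; simpa using hlt)
  rcases ha with ha | ha <;> rcases hb with hb | hb <;> rcases hc with hc | hc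
  · exact nocross1 ha hb hab
  · exact nocross1 ha hb hab
  · exact nocross1 ha hc hac
  · exact swap2 _ _ hb hc hbc
  · exact nocross1 hb hc hbc
  · exact swap2 _ _ ha hc hac
  · exact swap2 _ _ ha hb hab
  · exact swap2 _ _ ha hb hab


theorem completeBinaryTree_two_layer_no_three_crossing (h : ℕ) :
    ∃ (A B : Set {i : Fin (2 ^ (h + 1)) // 1 ≤ (i : ℕ)})
      (x : {i : Fin (2 ^ (h + 1)) // 1 ≤ (i : ℕ)} → ℝ),
      IsBipartition (completeBinaryTree h) A B ∧ IsTwoLayerDrawing A B x ∧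
      ¬ ∃ S, IsKCrossing (completeBinaryTree h) A B x 3 S := by
  classical
  refine ⟨{v | Even (Nat.log 2 (v.1 : ℕ))}, {v | ¬ Even (Nat.log 2 (v.1 : ℕ))},
    fun v => ((v.1 : ℕ) : ℝ), ⟨?_, ?_, ?_⟩, ⟨?_, ?_⟩, ?_⟩
  · exact Set.disjoint_left.2 fun v hv hv' => hv' hv
  · ext v; simp [em, Nat.even_or_odd, ← Nat.not_even_iff_odd]
  · intro u v huv
    simp only [completeBinaryTree, fromRel_adj] at huv
    obtain ⟨-, hrel | hrel⟩ := huv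
    · have hiff : Even (Nat.log 2 (v.1 : ℕ)) ↔ ¬ Even (Nat.log 2 (u.1 : ℕ)) := by
        rw [log_child u.2 hrel]; exact Nat.even_add_one
      by_cases hu : Even (Nat.log 2 (u.1 : ℕ))
      · refine Or.inl ⟨hu, ?_⟩; simp only [Set.mem_setOf_eq]; tauto
      · refine Or.inr ⟨hu, ?_⟩; simp only [Set.mem_setOf_eq]; tauto
    · have hiff : Even (Nat.log 2 (u.1 : ℕ)) ↔ ¬ Even (Nat.log 2 (v.1 : ℕ)) := by
        rw [log_child v.2 hrel]; exact Nat.even_add_one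
      by_cases hu : Even (Nat.log 2 (u.1 : ℕ))
      · refine Or.inl ⟨hu, ?_⟩; simp only [Set.mem_setOf_eq]; tauto
      · refine Or.inr ⟨hu, ?_⟩; simp only [Set.mem_setOf_eq]; tauto
  · intro a _ b _ hab
    have hab' : ((a.1 : ℕ) : ℝ) = ((b.1 : ℕ) : ℝ) := hab
    exact Subtype.ext (Fin.ext (by exact_mod_cast hab'))
  · intro a _ b _ hab
    have hab' : ((a.1 : ℕ) : ℝ) = ((b.1 : ℕ) : ℝ) := hab
    exact Subtype.ext (Fin.ext (by exact_mod_cast hab'))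
  · rintro ⟨S, hcard, hdrawn, hcross⟩
    obtain ⟨e, f, g, hef, heg, hfg, hS⟩ := Finset.card_eq_three.mp hcard
    have he : e ∈ S := by simp [hS]
    have hf : f ∈ S := by simp [hS]
    have hg : g ∈ S := by simp [hS]
    have child : ∀ a ∈ S, ChildRel ((a.1.1 : ℕ), (a.2.1 : ℕ)) ∨
        ChildRel (((a.1.1 : ℕ), (a.2.1 : ℕ)) : ℕ × ℕ).swap := by
      intro a haS
      have := (hdrawn a haS).2.2
      simp only [completeBinaryTree, fromRel_adj] at this
      obtain ⟨-, hrel | hrel⟩ := this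
      · exact Or.inl hrel
      · exact Or.inr hrel
    have cr : ∀ a ∈ S, ∀ b ∈ S, a ≠ b →
        (((a.1.1 : ℕ) : ℝ) - ((b.1.1 : ℕ) : ℕ)) * (((a.2.1 : ℕ) : ℝ) - ((b.2.1 : ℕ) : ℕ)) < 0 := by
      intro a ha b hb hne
      have := hcross a ha b hb hne
      simpa [Crosses] using this
    exact no_three_s6 (child e he) (child f hf) (child g hg)
      (cr e he f hf hef) (cr e he g hg heg) (cr f hf g hg hfg)
end

section
/- For every natural number h, the h × h square grid graph G_h has a 2-layer drawing with no 3-crossing. -/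
open SimpleGraph

/-- The `h × h` square grid graph: vertices are pairs of coordinates, and two
vertices are adjacent iff they differ by `1` in exactly one coordinate. -/
def gridGraph (h : ℕ) : SimpleGraph (Fin h × Fin h) :=
  SimpleGraph.fromRel (fun u v =>
    (u.1 = v.1 ∧ v.2.1 = u.2.1 + 1) ∨ (u.2 = v.2 ∧ v.1.1 = u.1.1 + 1))

-- auxiliary lemmas for the main theorem

/-- diagonal index of a grid vertex -/
private def gdiag {h : ℕ} (v : Fin h × Fin h) : ℕ := v.1.1 + v.2.1

/-- the x-coordinate (as a natural number) used in our drawing -/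
private def gnval {h : ℕ} (v : Fin h × Fin h) : ℕ := gdiag v * h + v.1.1

private lemma glex_mono {h s s' r r' : ℕ} (hr : r < h) (hss : s < s') :
    s * h + r < s' * h + r' := by
  calc s * h + r < s * h + h := by omega
    _ = (s + 1) * h := by ring
    _ ≤ s' * h := Nat.mul_le_mul_right h hss
    _ ≤ s' * h + r' := Nat.le_add_right _ _

private lemma glex_iff {h s s' r r' : ℕ} (hr : r < h) (hr' : r' < h) :
    s * h + r < s' * h + r' ↔ s < s' ∨ (s = s' ∧ r < r') := by
  constructor
  · intro H
    rcases Nat.lt_trichotomy s s' with h1 | h1 | h1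
    · exact Or.inl h1
    · subst h1; exact Or.inr ⟨rfl, by omega⟩
    · exact absurd (glex_mono (r' := r) hr' h1) (by omega)
  · rintro (h1 | ⟨rfl, h1⟩)
    · exact glex_mono hr h1
    · omega

private lemma gnval_lt_iff {h : ℕ} (u v : Fin h × Fin h) :
    gnval u < gnval v ↔ gdiag u < gdiag v ∨ (gdiag u = gdiag v ∧ u.1.1 < v.1.1) :=
  glex_iff u.1.2 v.1.2

private lemma gcross_nat {V : Type*} (n : V → ℕ) (e f : V × V) :
    Crosses (fun v => (n v : ℝ)) e f ↔
      (n e.1 < n f.1 ∧ n f.2 < n e.2) ∨ (n f.1 < n e.1 ∧ n e.2 < n f.2) := by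
  unfold Crosses
  rw [mul_neg_iff]
  constructor
  · rintro (⟨h1, h2⟩ | ⟨h1, h2⟩)
    · rw [sub_pos, Nat.cast_lt] at h1
      rw [sub_neg, Nat.cast_lt] at h2
      exact Or.inr ⟨h1, h2⟩
    · rw [sub_neg, Nat.cast_lt] at h1
      rw [sub_pos, Nat.cast_lt] at h2
      exact Or.inl ⟨h1, h2⟩
  · rintro (⟨h1, h2⟩ | ⟨h1, h2⟩)
    · exact Or.inr ⟨by rw [sub_neg, Nat.cast_lt]; exact h1,
        by rw [sub_pos, Nat.cast_lt]; exact h2⟩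
    · exact Or.inl ⟨by rw [sub_pos, Nat.cast_lt]; exact h1,
        by rw [sub_neg, Nat.cast_lt]; exact h2⟩

/-- Structure of an edge of the grid graph, in terms of diagonals and rows. -/
private lemma gadj_facts {h : ℕ} {u v : Fin h × Fin h}
    (huv : (gridGraph h).Adj u v) :
    (gdiag v = gdiag u + 1 ∧ (v.1.1 = u.1.1 ∨ v.1.1 = u.1.1 + 1)) ∨
    (gdiag u = gdiag v + 1 ∧ (u.1.1 = v.1.1 ∨ u.1.1 = v.1.1 + 1)) := by
  rw [gridGraph, SimpleGraph.fromRel_adj] at huv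
  unfold gdiag
  rcases huv.2 with (⟨h1, h2⟩ | ⟨h1, h2⟩) | (⟨h1, h2⟩ | ⟨h1, h2⟩) <;>
    [ (have := congrArg Fin.val h1; omega);
      (have := congrArg Fin.val h1; omega);
      (have := congrArg Fin.val h1; omega);
      (have := congrArg Fin.val h1; omega) ]


/-- Two crossing drawn edges live on adjacent diagonal pairs. -/
private lemma gcross_diag {h : ℕ} {e f : (Fin h × Fin h) × (Fin h × Fin h)}
    (he1 : gdiag e.1 % 2 = 0) (he2 : gdiag e.2 % 2 = 1)
    (hf1 : gdiag f.1 % 2 = 0) (hf2 : gdiag f.2 % 2 = 1)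
    (hea : (gdiag e.2 = gdiag e.1 + 1 ∧ (e.2.1.1 = e.1.1.1 ∨ e.2.1.1 = e.1.1.1 + 1)) ∨
           (gdiag e.1 = gdiag e.2 + 1 ∧ (e.1.1.1 = e.2.1.1 ∨ e.1.1.1 = e.2.1.1 + 1)))
    (hfa : (gdiag f.2 = gdiag f.1 + 1 ∧ (f.2.1.1 = f.1.1.1 ∨ f.2.1.1 = f.1.1.1 + 1)) ∨
           (gdiag f.1 = gdiag f.2 + 1 ∧ (f.1.1.1 = f.2.1.1 ∨ f.1.1.1 = f.2.1.1 + 1)))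
    (hc : Crosses (fun v => ((gnval v : ℕ) : ℝ)) e f) :
    min (gdiag e.1) (gdiag e.2) + 1 = min (gdiag f.1) (gdiag f.2) ∨
    min (gdiag f.1) (gdiag f.2) + 1 = min (gdiag e.1) (gdiag e.2) := by
  have hc' := (gcross_nat gnval e f).mp hc
  rw [gnval_lt_iff, gnval_lt_iff, gnval_lt_iff, gnval_lt_iff] at hc'
  omega

theorem gridGraph_two_layer_no_three_crossing (h : ℕ) :
    ∃ (A B : Set (Fin h × Fin h)) (x : Fin h × Fin h → ℝ),
      IsBipartition (gridGraph h) A B ∧ IsTwoLayerDrawing A B x ∧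
      ¬ ∃ S, IsKCrossing (gridGraph h) A B x 3 S := by
  classical
  refine ⟨{v | gdiag v % 2 = 0}, {v | gdiag v % 2 = 1},
    fun v => ((gnval v : ℕ) : ℝ), ⟨?_, ?_, ?_⟩, ?_, ?_⟩
  · -- disjoint
    rw [Set.disjoint_left]
    intro v hv hv'
    simp only [Set.mem_setOf_eq] at hv hv'
    omega
  · -- union is univ
    ext v
    simp only [Set.mem_union, Set.mem_setOf_eq, Set.mem_univ, iff_true]
    omega
  · -- adjacency respects bipartition
    intro u v huv
    have := gadj_facts huv
    simp only [Set.mem_setOf_eq]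
    omega
  · -- injectivity on each layer
    have hinj : Function.Injective (fun v : Fin h × Fin h => ((gnval v : ℕ) : ℝ)) := by
      intro u v huv
      have h1 : gnval u = gnval v := Nat.cast_injective huv
      unfold gnval at h1
      have hs : gdiag u = gdiag v := by
        rcases Nat.lt_trichotomy (gdiag u) (gdiag v) with hlt | he | hlt
        · exact absurd (glex_mono (r' := v.1.1) u.1.2 hlt) (by omega)
        · exact he
        · exact absurd (glex_mono (r' := u.1.1) v.1.2 hlt) (by omega)
      rw [hs] at h1
      have hr : u.1.1 = v.1.1 := by omega
      have hc : u.2.1 = v.2.1 := by unfold gdiag at hs; omega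
      exact Prod.ext (Fin.ext hr) (Fin.ext hc)
    exact ⟨hinj.injOn, hinj.injOn⟩
  · -- no 3-crossing
    rintro ⟨S, hcard, hdrawn, hcross⟩
    obtain ⟨e, f, g, hef, heg, hfg, rfl⟩ := Finset.card_eq_three.mp hcard
    have he : e ∈ ({e, f, g} : Finset _) := by simp
    have hf : f ∈ ({e, f, g} : Finset _) := by simp
    have hg : g ∈ ({e, f, g} : Finset _) := by simp
    -- structural facts about each edge
    have fe := hdrawn e he
    have ff := hdrawn f hf
    have fg := hdrawn g hg
    obtain ⟨he1, he2, hea⟩ := fe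
    obtain ⟨hf1, hf2, hfa⟩ := ff
    obtain ⟨hg1, hg2, hga⟩ := fg
    simp only [Set.mem_setOf_eq] at he1 he2 hf1 hf2 hg1 hg2
    have ae := gadj_facts hea
    have af := gadj_facts hfa
    have ag := gadj_facts hga
    -- crossing facts
    have cef := gcross_diag he1 he2 hf1 hf2 ae af (hcross e he f hf hef)
    have ceg := gcross_diag he1 he2 hg1 hg2 ae ag (hcross e he g hg heg)
    have cfg := gcross_diag hf1 hf2 hg1 hg2 af ag (hcross f hf g hg hfg)
    omega
end

section
/- Let G be a bipartite graph with bipartition {A,B}, and let (X_1,…,X_n) be a path-decomposition of G of width k such that, setting ℓ(v) := min{i : v ∈ X_i}, the values ℓ(v) are pairwise distinct. Then in the 2-layer drawing of G that places each vertex v of A at x-coordinate ℓ(v) on the line y = 0 and each vertex v of B at x-coordinate ℓ(v) on the line y = 1, there is no (k+2)-crossing. -/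
open SimpleGraph

theorem no_large_crossing_of_pathDecomp {V : Type*} (k n : ℕ)
    (G : SimpleGraph V) (A B : Set V)
    (Bags : Fin n → Finset V) (l : V → Fin n)
    (hbip : IsBipartition G A B)
    (hpd : IsPathDecomp G Bags)
    (hwidth : (Finset.univ.sup fun i => (Bags i).card) - 1 = k)
    (hl : ∀ v, v ∈ Bags (l v) ∧ ∀ i, v ∈ Bags i → l v ≤ i)
    (hinj : Function.Injective l) :
    ¬ ∃ S, IsKCrossing G A B (fun v => ((l v : ℕ) : ℝ)) (k + 2) S := by
  rintro ⟨S, hcard, hdrawn, hcross⟩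
  set x : V → ℝ := fun v => ((l v : ℕ) : ℝ) with hx
  have hS : S.Nonempty := by
    rw [← Finset.card_pos, hcard]; omega
  obtain ⟨e0, he0S, he0min⟩ := S.exists_min_image (fun e => max (l e.1) (l e.2)) hS
  set t : Fin n := max (l e0.1) (l e0.2) with ht
  -- both endpoints of each edge lie in the bag at index max of their l-values
  have hmem : ∀ e ∈ S, e.1 ∈ Bags (max (l e.1) (l e.2)) ∧
      e.2 ∈ Bags (max (l e.1) (l e.2)) := by
    intro e heS
    obtain ⟨hA, hB, hadj⟩ := hdrawn e heS
    obtain ⟨i, hi1, hi2⟩ := hpd.2.2 e.1 e.2 hadj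
    have h1 := (hl e.1).2 i hi1
    have h2 := (hl e.2).2 i hi2
    have hmi : max (l e.1) (l e.2) ≤ i := max_le h1 h2
    exact ⟨hpd.2.1 (l e.1) _ i (le_max_left _ _) hmi e.1 (hl e.1).1 hi1,
      hpd.2.1 (l e.2) _ i (le_max_right _ _) hmi e.2 (hl e.2).1 hi2⟩
  -- choice function: an endpoint of each edge lying in Bags t
  set c : V × V → V := fun f => if l f.1 ≤ t then f.1 else f.2 with hc
  have hmaps : ∀ f ∈ S, c f ∈ Bags t := by
    intro f hfS
    by_cases h1 : l f.1 ≤ t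
    · simp only [hc, if_pos h1]
      exact hpd.2.1 (l f.1) t _ h1 (he0min f hfS) f.1 (hl f.1).1 (hmem f hfS).1
    · simp only [hc, if_neg h1]
      push_neg at h1
      have h2 : l f.2 ≤ t := by
        by_contra h2
        push_neg at h2
        have hne : e0 ≠ f := by
          intro h; subst h
          exact absurd (le_max_left (l e0.1) (l e0.2)) (not_le.2 h1)
        have hcr : (x e0.1 - x f.1) * (x e0.2 - x f.2) < 0 :=
          hcross e0 he0S f hfS hne
        have ha1 : l e0.1 < l f.1 := lt_of_le_of_lt (le_max_left _ _) h1
        have ha2 : l e0.2 < l f.2 := lt_of_le_of_lt (le_max_right _ _) h2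
        have hb1 : x e0.1 - x f.1 < 0 := by
          have : ((l e0.1 : ℕ) : ℝ) < ((l f.1 : ℕ) : ℝ) := by
            exact_mod_cast (Fin.lt_def.mp ha1)
          simpa [hx] using sub_neg.mpr this
        have hb2 : x e0.2 - x f.2 < 0 := by
          have : ((l e0.2 : ℕ) : ℝ) < ((l f.2 : ℕ) : ℝ) := by
            exact_mod_cast (Fin.lt_def.mp ha2)
          simpa [hx] using sub_neg.mpr this
        have := mul_pos_of_neg_of_neg hb1 hb2
        linarith
      exact hpd.2.1 (l f.2) t _ h2 (he0min f hfS) f.2 (hl f.2).1 (hmem f hfS).2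
  have hinjOn : Set.InjOn c S := by
    intro e heS f hfS hef
    by_contra hne
    have hcr : (x e.1 - x f.1) * (x e.2 - x f.2) < 0 := hcross e heS f hfS hne
    obtain ⟨hAe, hBe, _⟩ := hdrawn e heS
    obtain ⟨hAf, hBf, _⟩ := hdrawn f hfS
    by_cases h1 : l e.1 ≤ t <;> by_cases h2 : l f.1 ≤ t <;>
      simp only [hc, h1, h2, if_true, if_false] at hef
    · -- e.1 = f.1
      rw [hef, sub_self, zero_mul] at hcr
      exact lt_irrefl 0 hcr
    · -- e.1 = f.2 : contradicts disjointness
      exact (Set.disjoint_left.mp hbip.1 hAe) (hef ▸ hBf)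
    · -- e.2 = f.1
      exact (Set.disjoint_left.mp hbip.1 hAf) (hef ▸ hBe)
    · -- e.2 = f.2
      rw [hef, sub_self, mul_zero] at hcr
      exact lt_irrefl 0 hcr
  have hle := Finset.card_le_card_of_injOn c hmaps hinjOn
  have hsup := Finset.le_sup (f := fun i => (Bags i).card) (Finset.mem_univ t)
  omega
end

section
/- Let G be a bipartite graph with bipartition {A,B}, and let (X_1,…,X_n) be a path-decomposition of G of width k such that, setting ℓ(v) := min{i : v ∈ X_i}, the values ℓ(v) are pairwise distinct. Then in the 2-layer drawing of G that places each vertex v of A at x-coordinate ℓ(v) on the line y = 0 and each vertex v of B at x-coordinate ℓ(v) on the line y = 1, there is no (k+1,k+1)-crossing. -/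
open SimpleGraph

private def vminE {V : Type*} {n : ℕ} (l : V → Fin n) (e : V × V) : V :=
  if l e.1 ≤ l e.2 then e.1 else e.2

private lemma l_vminE {V : Type*} {n : ℕ} (l : V → Fin n) (e : V × V) :
    l (vminE l e) = min (l e.1) (l e.2) := by
  by_cases h : l e.1 ≤ l e.2 <;> simp [vminE, min_def, h]

private lemma vminE_mem {V : Type*} {n : ℕ} (l : V → Fin n) (e : V × V) :
    vminE l e = e.1 ∨ vminE l e = e.2 := by
  by_cases h : l e.1 ≤ l e.2 <;> simp [vminE, h]

private lemma crosses_iff' {V : Type*} {n : ℕ} (l : V → Fin n) (e f : V × V) :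
    Crosses (fun v => ((l v : ℕ) : ℝ)) e f ↔
      (l f.1 < l e.1 ∧ l e.2 < l f.2) ∨ (l e.1 < l f.1 ∧ l f.2 < l e.2) := by
  unfold Crosses
  rw [mul_neg_iff]
  simp only [sub_pos, sub_neg, Nat.cast_lt, Fin.lt_def]

private lemma aux_main {V : Type*} (k n : ℕ) (G : SimpleGraph V) (A B : Set V)
    (Bags : Fin n → Finset V) (l : V → Fin n)
    (hAB : Disjoint A B)
    (hpd : IsPathDecomp G Bags)
    (hcard : ∀ i, (Bags i).card ≤ k + 1)
    (hl : ∀ v, v ∈ Bags (l v) ∧ ∀ i, v ∈ Bags i → l v ≤ i)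
    (S T : Finset (V × V))
    (hSd : ∀ e ∈ S, IsDrawnEdge G A B e)
    (hTd : ∀ e ∈ T, IsDrawnEdge G A B e)
    (hTm : ∀ e ∈ T, ∀ f ∈ T, e ≠ f →
      e.1 ≠ f.1 ∧ e.1 ≠ f.2 ∧ e.2 ≠ f.1 ∧ e.2 ≠ f.2)
    (hTcard : T.card = k + 1)
    (hcross : ∀ e ∈ S, ∀ f ∈ T,
      (l f.1 < l e.1 ∧ l e.2 < l f.2) ∨ (l e.1 < l f.1 ∧ l f.2 < l e.2))
    (e : V × V) (he : e ∈ S)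
    (hmax : ∀ f ∈ T, min (l f.1) (l f.2) ≤ min (l e.1) (l e.2)) :
    False := by
  classical
  set j : Fin n := min (l e.1) (l e.2) with hj
  -- every f ∈ T has vminE l f ∈ Bags j
  have hfmem : ∀ f ∈ T, vminE l f ∈ Bags j := by
    intro f hf
    obtain ⟨hfA, hfB, hfAdj⟩ := hTd f hf
    obtain ⟨i, hfi1, hfi2⟩ := hpd.2.2 f.1 f.2 hfAdj
    have hle1 : l f.1 ≤ i := (hl f.1).2 i hfi1
    have hle2 : l f.2 ≤ i := (hl f.2).2 i hfi2
    have hji : j ≤ i := by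
      rcases hcross e he f hf with ⟨h1, h2⟩ | ⟨h1, h2⟩
      · exact le_trans (le_trans (min_le_right _ _) (le_of_lt h2)) hle2
      · exact le_trans (le_trans (min_le_left _ _) (le_of_lt h1)) hle1
    have hmem_i : vminE l f ∈ Bags i := by
      rcases vminE_mem l f with h | h <;> rw [h] <;> assumption
    have := hpd.2.1 (l (vminE l f)) j i ?_ hji (vminE l f) (hl _).1 hmem_i
    · exact this
    · rw [l_vminE l f]; exact hmax f hf
  -- vminE l e ∈ Bags j
  have hemem : vminE l e ∈ Bags j := by
    have := (hl (vminE l e)).1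
    rwa [l_vminE l e] at this
  -- distinctness
  have hne : ∀ f ∈ T, vminE l e ≠ vminE l f := by
    intro f hf
    obtain ⟨heA, heB, _⟩ := hSd e he
    obtain ⟨hfA, hfB, _⟩ := hTd f hf
    have h11 : e.1 ≠ f.1 := by
      rcases hcross e he f hf with ⟨h1, _⟩ | ⟨h1, _⟩ <;>
        exact fun h => absurd (congrArg l h) (by simp [h1.ne, h1.ne'])
    have h22 : e.2 ≠ f.2 := by
      rcases hcross e he f hf with ⟨_, h2⟩ | ⟨_, h2⟩ <;>
        exact fun h => absurd (congrArg l h) (by simp [h2.ne, h2.ne'])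
    have h12 : e.1 ≠ f.2 := hAB.ne_of_mem heA hfB
    have h21 : e.2 ≠ f.1 := (hAB.ne_of_mem hfA heB).symm
    rcases vminE_mem l e with h | h <;> rcases vminE_mem l f with h' | h' <;>
      rw [h, h'] <;> assumption
  have hinjT : Set.InjOn (vminE l) T := by
    intro f hf f' hf' hEq
    by_contra hne'
    obtain ⟨h11, h12, h21, h22⟩ := hTm f hf f' hf' hne'
    rcases vminE_mem l f with h | h <;> rcases vminE_mem l f' with h' | h' <;>
      rw [h, h'] at hEq <;> [exact h11 hEq; exact h12 hEq; exact h21 hEq; exact h22 hEq]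
  have hsub : insert (vminE l e) (T.image (vminE l)) ⊆ Bags j := by
    intro v hv
    rcases Finset.mem_insert.1 hv with h | h
    · rwa [h]
    · obtain ⟨f, hf, rfl⟩ := Finset.mem_image.1 h
      exact hfmem f hf
  have hcard2 : (insert (vminE l e) (T.image (vminE l))).card = k + 2 := by
    rw [Finset.card_insert_of_notMem, Finset.card_image_of_injOn hinjT, hTcard]
    intro h
    obtain ⟨f, hf, hEq⟩ := Finset.mem_image.1 h
    exact hne f hf hEq.symm
  have := Finset.card_le_card hsub
  rw [hcard2] at this
  have := hcard j
  omega

theorem no_large_st_crossing_of_pathDecomp {V : Type*} (k n : ℕ)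
    (G : SimpleGraph V) (A B : Set V)
    (Bags : Fin n → Finset V) (l : V → Fin n)
    (hbip : IsBipartition G A B)
    (hpd : IsPathDecomp G Bags)
    (hwidth : (Finset.univ.sup fun i => (Bags i).card) - 1 = k)
    (hl : ∀ v, v ∈ Bags (l v) ∧ ∀ i, v ∈ Bags i → l v ≤ i)
    (hinj : Function.Injective l) :
    ¬ ∃ S T, IsSTCrossing G A B (fun v => ((l v : ℕ) : ℝ)) (k + 1) (k + 1) S T := by
  classical
  rintro ⟨S, T, hSm, hTm, hScard, hTcard, hSnc, hTnc, hcross⟩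
  have hcard : ∀ i, (Bags i).card ≤ k + 1 := by
    intro i
    have h1 : (Bags i).card ≤ Finset.univ.sup fun i => (Bags i).card :=
      Finset.le_sup (f := fun i => (Bags i).card) (Finset.mem_univ i)
    omega
  have hcross' : ∀ e ∈ S, ∀ f ∈ T,
      (l f.1 < l e.1 ∧ l e.2 < l f.2) ∨ (l e.1 < l f.1 ∧ l f.2 < l e.2) :=
    fun e he f hf => (crosses_iff' l e f).1 (hcross e he f hf)
  have hSne : (S ∪ T).Nonempty := by
    have hS : S.Nonempty := Finset.card_pos.1 (by omega)
    exact hS.mono Finset.subset_union_left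
  obtain ⟨e, heST, hmax⟩ :=
    Finset.exists_max_image (S ∪ T) (fun g => min (l g.1) (l g.2)) hSne
  rcases Finset.mem_union.1 heST with he | he
  · exact aux_main k n G A B Bags l hbip.1 hpd hcard hl S T hSm.1 hTm.1 hTm.2 hTcard
      hcross' e he (fun f hf => hmax f (Finset.mem_union_right _ hf))
  · exact aux_main k n G A B Bags l hbip.1 hpd hcard hl T S hTm.1 hSm.1 hSm.2 hScard
      (fun e' he' f' hf' => (hcross' f' hf' e' he').symm)
      e he (fun f hf => hmax f (Finset.mem_union_left _ hf))
end
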